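/- arXiv:1704.03715 — 2 statements merged into one kernel-verified Lean document; each statement's English description precedes it below -/
import Mathlib

section
/- If a PLS (J,Λ) of small girth has a line-preserving rank-modeling graph, then (J,Λ) is a BMPL. -/
open scoped Classical
noncomputable section

/-! ### Lattice-theoretic preliminaries -/

/-- A tight embedding between bounded lattices: a cover-preserving lattice
homomorphism sending bottom to bottom. -/
def IsTightEmbedding {L L' : Type*} [Lattice L] [BoundedOrder L] [Lattice L'] [BoundedOrder L']
    (f : L → L') : Prop :=
  (∀ a b : L, f (a ⊔ b) = f a ⊔ f b) ∧ (∀ a b : L, f (a ⊓ b) = f a ⊓ f b) ∧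
    f ⊥ = ⊥ ∧ ∀ a b : L, a ⋖ b → f a ⋖ f b

/-- `Part(n)` is formalized as `Setoid (Fin n)`, the lattice of partitions of an
`n`-element set ordered by refinement. -/
def TightlyPartitionEmbeddable (L : Type*) [Lattice L] [BoundedOrder L] : Prop :=
  ∃ (n : ℕ) (f : L → Setoid (Fin n)), IsTightEmbedding f

/-- 2-distributivity. -/
def TwoDistrib (L : Type*) [Lattice L] : Prop :=
  ∀ a b c d : L, a ⊓ (b ⊔ c ⊔ d) = (a ⊓ (b ⊔ c)) ⊔ (a ⊓ (b ⊔ d)) ⊔ (a ⊓ (c ⊔ d))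

/-- `L` has a cover-preserving sublattice isomorphic to `M₄`: six elements
`b, t, a₁,…,a₄` with `b ⋖ aᵢ ⋖ t` (covers in `L`), `aᵢ ⊓ aⱼ = b`, `aᵢ ⊔ aⱼ = t`. -/
def HasCoverPreservingM4 (L : Type*) [Lattice L] : Prop :=
  ∃ (b t : L) (a : Fin 4 → L), Function.Injective a ∧
    (∀ i, b ⋖ a i) ∧ (∀ i, a i ⋖ t) ∧
    (∀ i j, i ≠ j → a i ⊓ a j = b) ∧ ∀ i j, i ≠ j → a i ⊔ a j = t

/-- Thin: 2-distributive and without cover-preserving `M₄`. -/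
def IsThin (L : Type*) [Lattice L] : Prop := TwoDistrib L ∧ ¬ HasCoverPreservingM4 L

/-- Height `d(L)` of a finite lattice: one less than the largest cardinality of a chain. -/
def latHeight (L : Type*) [Lattice L] [Fintype L] : ℕ :=
  (((Finset.univ : Finset (Finset L)).filter fun c : Finset L => IsChain (· ≤ ·) (c : Set L)).sup
    Finset.card) - 1

/-- The set `J(L)` of (nonzero) join-irreducible elements of a finite lattice. -/
def JFinset (L : Type*) [Lattice L] [Fintype L] : Finset L :=
  Finset.univ.filter fun p => SupIrred p

/-- `J(a) = {p ∈ J(L) : p ≤ a}`. -/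
def Jle {L : Type*} [Lattice L] [Fintype L] (a : L) : Finset L :=
  Finset.univ.filter fun p => SupIrred p ∧ p ≤ a

/-! ### Lattice congruences -/

/-- A congruence of a lattice. -/
structure LatCon (N : Type*) [Lattice N] where
  r : N → N → Prop
  refl : ∀ a, r a a
  symm : ∀ {a b}, r a b → r b a
  trans : ∀ {a b c}, r a b → r b c → r a c
  sup_comp : ∀ {a b c d}, r a b → r c d → r (a ⊔ c) (b ⊔ d)
  inf_comp : ∀ {a b c d}, r a b → r c d → r (a ⊓ c) (b ⊓ d)

/-- Containment of congruences. -/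
def LatCon.le {N : Type*} [Lattice N] (c d : LatCon N) : Prop := ∀ a b, c.r a b → d.r a b

/-- A maximal (proper) congruence: a coatom of the congruence lattice. -/
def LatCon.IsMaximal {N : Type*} [Lattice N] (c : LatCon N) : Prop :=
  (∃ a b, ¬ c.r a b) ∧ ∀ d : LatCon N, c.le d → d.le c ∨ ∀ a b, d.r a b

/-! ### Partial linear spaces -/

/-- A partial linear space with 3-element lines: any two distinct lines meet in
at most one point. -/
structure PLS (α : Type*) where
  J : Finset α
  Λ : Finset (Finset α)
  line_sub : ∀ ℓ ∈ Λ, ℓ ⊆ J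
  line_card : ∀ ℓ ∈ Λ, ℓ.card = 3
  line_inter : ∀ ℓ ∈ Λ, ∀ ℓ' ∈ Λ, ℓ ≠ ℓ' → (ℓ ∩ ℓ').card ≤ 1

/-- PLS-rank `rk(J,Λ) = |J| - |Λ|`. -/
def PLS.rk {α : Type*} (S : PLS α) : ℤ := (S.J.card : ℤ) - (S.Λ.card : ℤ)

/-- A path `[p₀,…,p_{n-1}]` together with its lines `ℓᵢ = [pᵢ,pᵢ₊₁]` (`i+1 < n`):
the lines exist, are distinct, and consecutive lines are the only intersecting ones. -/
structure PLSPath (α : Type*) where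
  n : ℕ
  two_le : 2 ≤ n
  p : ℕ → α
  line : ℕ → Finset α
  p_mem_left : ∀ i, i + 1 < n → p i ∈ line i
  p_mem_right : ∀ i, i + 1 < n → p (i + 1) ∈ line i
  p_ne : ∀ i, i + 1 < n → p i ≠ p (i + 1)
  lines_ne : ∀ i j, i < j → j + 1 < n → line i ≠ line j
  lines_inter_iff : ∀ i j, i < j → j + 1 < n → ((line i ∩ line j).Nonempty ↔ j = i + 1)

namespace PLSPath
variable {α : Type*}

/-- The underlying point set `P*` of a path. -/
def ptSet (P : PLSPath α) : Finset α := (Finset.range (P.n - 1)).biUnion P.line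

/-- First point of a path. -/
def first (P : PLSPath α) : α := P.p 0

/-- Last point of a path. -/
def last (P : PLSPath α) : α := P.p (P.n - 1)

/-- The set of lines of a path. -/
def lineSet (P : PLSPath α) : Finset (Finset α) := (Finset.range (P.n - 1)).image P.line

/-- The path lies in the line set `Λ`. -/
def In (P : PLSPath α) (Λ : Finset (Finset α)) : Prop := ∀ i, i + 1 < P.n → P.line i ∈ Λ

end PLSPath

/-- A cycle `(p₀,…,p_{n-1})`: a path whose closing line `[p_{n-1},p₀]` exists and
contains a point not on any path line. -/
structure PLSCycle (α : Type*) extends PLSPath α where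
  closing : Finset α
  closing_last : p (n - 1) ∈ closing
  closing_first : p 0 ∈ closing
  closing_new : ∃ q ∈ closing, ∀ i, i + 1 < n → q ∉ line i

namespace PLSCycle
variable {α : Type*}

/-- The cycle lies in the line set `Λ`. -/
def In (C : PLSCycle α) (Λ : Finset (Finset α)) : Prop :=
  C.toPLSPath.In Λ ∧ C.closing ∈ Λ

/-- The `i`-th `C`-line (for `i < n`; the last one is the closing line). -/
def cline (C : PLSCycle α) (i : ℕ) : Finset α :=
  if i + 1 < C.n then C.line i else C.closing

/-- The underlying point set `C*` of a cycle. -/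
def cptSet (C : PLSCycle α) : Finset α := (Finset.range C.n).biUnion C.cline

/-- The set `Λ*` of `C`-lines of a cycle. -/
def clineSet (C : PLSCycle α) : Finset (Finset α) := (Finset.range C.n).image C.cline

/-- `q` is the `C`-midpoint of the `i`-th `C`-line. -/
def IsMidpoint (C : PLSCycle α) (i : ℕ) (q : α) : Prop :=
  q ∈ C.cline i ∧ q ≠ C.p i ∧ q ≠ C.p ((i + 1) % C.n)

/-- `q` is a `C`-midpoint (of some `C`-line). -/
def IsMidpointPt (C : PLSCycle α) (q : α) : Prop := ∃ i < C.n, C.IsMidpoint i q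

/-- The set of `C`-midpoints. -/
def midSet (C : PLSCycle α) : Finset α := C.cptSet.filter fun q => C.IsMidpointPt q

end PLSCycle

/-- Acyclic PLS: it has no cycle. -/
def PLS.Acyclic {α : Type*} (S : PLS α) : Prop := ∀ C : PLSCycle α, ¬ C.In S.Λ

/-- QIMP: each line contains a quasi-isolated point. -/
def PLS.IsQIMP {α : Type*} (S : PLS α) : Prop :=
  ∀ ℓ ∈ S.Λ, ∃ q ∈ ℓ, ∀ ℓ' ∈ S.Λ, ℓ' ≠ ℓ → q ∉ ℓ'

/-- UMP: any line that occurs as a `C`-line has a unique midpoint, independent of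
the cycle. -/
def PLS.IsUMP {α : Type*} (S : PLS α) : Prop :=
  ∀ C C' : PLSCycle α, C.In S.Λ → C'.In S.Λ → ∀ i j, i < C.n → j < C'.n →
    C.cline i = C'.cline j →
    ∀ q q', C.IsMidpoint i q → C'.IsMidpoint j q' → q = q'

/-- `(J,Λ)` is a tree of the PLSes `F 0, …, F (t-1)`. -/
def PLS.IsTreeOf {α : Type*} (S : PLS α) (t : ℕ) (F : ℕ → PLS α) : Prop :=
  S.J = (Finset.range t).biUnion (fun i => (F i).J) ∧
  S.Λ = (Finset.range t).biUnion (fun i => (F i).Λ) ∧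
  ∀ i, 0 < i → i < t → ∃ x, (F i).J ∩ (Finset.range i).biUnion (fun j => (F j).J) = {x}

/-- Sparse PLS: a testifying ordering of the lines exists. -/
def PLS.Sparse {α : Type*} (S : PLS α) : Prop :=
  ∃ ℓ : ℕ → Finset α, (∀ i, i < S.Λ.card → ℓ i ∈ S.Λ) ∧
    (∀ i j, i < S.Λ.card → j < S.Λ.card → i ≠ j → ℓ i ≠ ℓ j) ∧
    ∀ i, i + 1 < S.Λ.card → ¬ ℓ (i + 1) ⊆ (Finset.range (i + 1)).biUnion ℓ

/-- Small girth: every cycle consists of three or four lines. -/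
def PLS.SmallGirth {α : Type*} (S : PLS α) : Prop :=
  ∀ C : PLSCycle α, C.In S.Λ → C.n = 3 ∨ C.n = 4

/-- Type 1 midpoint-link of the cycle `C`: a path from a `C`-midpoint to a
`C`-junction meeting `C*` only in its endpoints. -/
def IsType1Link {α : Type*} (C : PLSCycle α) (P : PLSPath α) : Prop :=
  C.IsMidpointPt P.first ∧ (∃ j < C.n, P.last = C.p j) ∧
    P.ptSet ∩ C.cptSet = {P.first, P.last}

/-- Type 2 midpoint-link of the cycle `C`: a path between two `C`-midpoints meeting
`C*` only in its endpoints. -/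
def IsType2Link {α : Type*} (C : PLSCycle α) (P : PLSPath α) : Prop :=
  C.IsMidpointPt P.first ∧ C.IsMidpointPt P.last ∧ P.first ≠ P.last ∧
    P.ptSet ∩ C.cptSet = {P.first, P.last}

/-- Benign type 1 link: the midpoint and junction sit on a common `C`-line. -/
def Benign1 {α : Type*} (C : PLSCycle α) (P : PLSPath α) : Prop :=
  ∃ i < C.n, P.first ∈ C.cline i ∧ P.last ∈ C.cline i

/-- Benign type 2 link: the two midpoints sit on intersecting `C`-lines. -/
def Benign2 {α : Type*} (C : PLSCycle α) (P : PLSPath α) : Prop :=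
  ∃ i, i < C.n ∧ ∃ j, j < C.n ∧ C.IsMidpoint i P.first ∧ C.IsMidpoint j P.last ∧
    (C.cline i ∩ C.cline j).Nonempty

/-- A benign midpoint-link (of either type). -/
def BenignLink {α : Type*} (C : PLSCycle α) (P : PLSPath α) : Prop :=
  (IsType1Link C P ∧ Benign1 C P) ∨ (IsType2Link C P ∧ Benign2 C P)

/-- BMPL: every midpoint-link of every cycle is benign. -/
def PLS.IsBMPL {α : Type*} (S : PLS α) : Prop :=
  ∀ C : PLSCycle α, C.In S.Λ → ∀ P : PLSPath α, P.In S.Λ →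
    (IsType1Link C P → Benign1 C P) ∧ (IsType2Link C P → Benign2 C P)

/-- All midpoint-links are of type 1, i.e. there are no type 2 midpoint-links. -/
def PLS.OnlyType1Links {α : Type*} (S : PLS α) : Prop :=
  ∀ C : PLSCycle α, C.In S.Λ → ∀ P : PLSPath α, P.In S.Λ → ¬ IsType2Link C P

/-- `S'` arises from `S` by adding the path `P`. -/
def AddsOnePath {α : Type*} (S' S : PLS α) (P : PLSPath α) : Prop :=
  P.In S'.Λ ∧ S'.J = S.J ∪ P.ptSet ∧ S.J ∩ P.ptSet = {P.first, P.last} ∧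
    (∀ i, i + 1 < P.n → P.line i ∉ S.Λ) ∧ S'.Λ = S.Λ ∪ P.lineSet

/-- `S'` arises from `S` by adding a benign midpoint-link. -/
def AddsBenignLink {α : Type*} (S' S : PLS α) : Prop :=
  ∃ (P : PLSPath α) (C : PLSCycle α), C.In S.Λ ∧ AddsOnePath S' S P ∧ BenignLink C P

/-- `S'` arises from `S` by adding a benign midpoint-link of type 1. -/
def AddsBenignLink1 {α : Type*} (S' S : PLS α) : Prop :=
  ∃ (P : PLSPath α) (C : PLSCycle α), C.In S.Λ ∧ AddsOnePath S' S P ∧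
    IsType1Link C P ∧ Benign1 C P

/-- Augmented UMP: obtained from a UMP by iteratively adding benign midpoint-links. -/
def PLS.IsAugmentedUMP {α : Type*} (S : PLS α) : Prop :=
  ∃ S₀ : PLS α, S₀.IsUMP ∧ Relation.ReflTransGen (fun X Y => AddsBenignLink Y X) S₀ S

/-- Augmented UMP of type 1: only benign midpoint-links of type 1 were added. -/
def PLS.IsAugmentedUMP1 {α : Type*} (S : PLS α) : Prop :=
  ∃ S₀ : PLS α, S₀.IsUMP ∧ Relation.ReflTransGen (fun X Y => AddsBenignLink1 Y X) S₀ S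

/-! ### Graphs -/

/-- `T` is the edge set of a triangle of `G`. -/
def IsTriangle {V : Type*} (G : SimpleGraph V) (T : Finset (Sym2 V)) : Prop :=
  ∃ a b c : V, G.Adj a b ∧ G.Adj b c ∧ G.Adj a c ∧ T = {s(a, b), s(b, c), s(a, c)}

/-- `Γ` is the edge set of a circuit of `G`. -/
def IsCircuitSet {V : Type*} (G : SimpleGraph V) (Γ : Finset (Sym2 V)) : Prop :=
  ∃ (v : V) (w : G.Walk v v), w.IsCycle ∧ w.edges.toFinset = Γ

/-- `Γ` is the edge set of a chordless circuit of `G`. -/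
def IsChordlessCircuit {V : Type*} (G : SimpleGraph V) (Γ : Finset (Sym2 V)) : Prop :=
  ∃ (v : V) (w : G.Walk v v), w.IsCycle ∧ w.edges.toFinset = Γ ∧
    ∀ a b : V, a ∈ w.support → b ∈ w.support → G.Adj a b → s(a, b) ∈ Γ

/-- `W` is the edge set of a wheel of `G` (degenerate wheel = triangle). -/
def IsWheel {V : Type*} (G : SimpleGraph V) (W : Finset (Sym2 V)) : Prop :=
  ∃ (n : ℕ) (hub : V) (v : ℕ → V), 2 ≤ n ∧
    (∀ i j, i < n → j < n → i ≠ j → v i ≠ v j) ∧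
    (∀ i, i < n → G.Adj hub (v i)) ∧
    (∀ i, i < n → G.Adj (v i) (v ((i + 1) % n))) ∧
    W = (Finset.range n).image (fun i => s(hub, v i)) ∪
        (Finset.range n).image (fun i => s(v i, v ((i + 1) % n)))

/-- Rank of an edge set `B` in the cycle matroid on the vertex set `V`:
`|V|` minus the number of connected components of `(V, B)`. -/
def grkOn (V : Type*) [Fintype V] (B : Finset (Sym2 V)) : ℕ :=
  Fintype.card V - Nat.card (SimpleGraph.fromEdgeSet (B : Set (Sym2 V))).ConnectedComponent

/-- Rank of the cycle matroid of the graph `G` (on its full edge set). -/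
def graphRank {V : Type*} [Fintype V] (G : SimpleGraph V) : ℕ :=
  Fintype.card V - Nat.card G.ConnectedComponent

/-- Closure of an edge set in the cycle matroid of `G`. -/
def graphCl {V : Type*} [Fintype V] (G : SimpleGraph V) (B : Finset (Sym2 V)) : Set (Sym2 V) :=
  {e | e ∈ G.edgeSet ∧ grkOn V (insert e B) = grkOn V B}

/-- The partition of the vertex set into connected components of `(V, B)`. -/
def compSetoid {V : Type*} (B : Finset (Sym2 V)) : Setoid V :=
  ⟨fun a b => (SimpleGraph.fromEdgeSet (B : Set (Sym2 V))).Reachable a b,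
    ⟨fun a => SimpleGraph.Reachable.refl a, fun h => h.symm, fun h h' => h.trans h'⟩⟩

/-- `ψ` line-preservingly models the PLS `S` by the graph `G`: it is a bijection from
the points onto the edges taking each line to (the edge set of) a triangle. -/
def LinePres {α V : Type*} (S : PLS α) (G : SimpleGraph V) (ψ : α → Sym2 V) : Prop :=
  Set.BijOn ψ (S.J : Set α) G.edgeSet ∧ ∀ ℓ ∈ S.Λ, IsTriangle G (ℓ.image ψ)

/-- Line-preserving rank-modeling by a graph. -/
def LinePresRankModels {α V : Type*} [Fintype V] (S : PLS α) (G : SimpleGraph V)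
    (ψ : α → Sym2 V) : Prop :=
  LinePres S G ψ ∧ (graphRank G : ℤ) = S.rk

/-- Cycle-preservation: the midpoints of each cycle map to a circuit of `G`. -/
def CyclePresCond {α V : Type*} (S : PLS α) (G : SimpleGraph V) (ψ : α → Sym2 V) : Prop :=
  ∀ C : PLSCycle α, C.In S.Λ → IsCircuitSet G (C.midSet.image ψ)

/-- Circuit-friendliness: each chordless circuit of `G` corresponds to a line or to
the set of midpoints of a cycle of `S`. -/
def CircuitFriendlyCond {α V : Type*} (S : PLS α) (G : SimpleGraph V) (ψ : α → Sym2 V) : Prop :=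
  ∀ Γ : Finset (Sym2 V), IsChordlessCircuit G Γ →
    (∃ ℓ ∈ S.Λ, ∀ x ∈ S.J, (ψ x ∈ Γ ↔ x ∈ ℓ)) ∨
    (∃ C : PLSCycle α, C.In S.Λ ∧ ∀ x ∈ S.J, (ψ x ∈ Γ ↔ C.IsMidpointPt x))

/-! ### Matroids -/

/-- A (finite) matroid on a finite ground set, given by its independent sets. -/
structure FinMatroid (β : Type*) where
  E : Finset β
  Indep : Finset β → Prop
  indep_subset : ∀ I, Indep I → I ⊆ E
  indep_empty : Indep ∅
  indep_mono : ∀ I J, Indep J → I ⊆ J → Indep I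
  indep_exchange : ∀ I J, Indep I → Indep J → I.card < J.card →
    ∃ x ∈ J, x ∉ I ∧ Indep (insert x I)

namespace FinMatroid
variable {β : Type*}

/-- Rank of a subset. -/
def rkOn (M : FinMatroid β) (X : Finset β) : ℕ :=
  (X.powerset.filter fun I => M.Indep I).sup Finset.card

/-- Rank of the matroid. -/
def rk (M : FinMatroid β) : ℕ := M.rkOn M.E

/-- Closure of a subset. -/
def cl (M : FinMatroid β) (X : Finset β) : Finset β :=
  M.E.filter fun e => M.rkOn (insert e (X ∩ M.E)) = M.rkOn (X ∩ M.E)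

/-- Simple matroid: all subsets of cardinality at most 2 are independent. -/
def IsSimple (M : FinMatroid β) : Prop :=
  ∀ X : Finset β, X ⊆ M.E → X.card ≤ 2 → M.Indep X

/-- Flat (closed set) of a matroid. -/
def Flat (M : FinMatroid β) (F : Finset β) : Prop := F ⊆ M.E ∧ M.cl F = F

/-- Binary matroid: representable over GF(2). -/
def IsBinary (M : FinMatroid β) : Prop :=
  ∃ (m : ℕ) (ρ : β → (Fin m → ZMod 2)),
    ∀ I : Finset β, I ⊆ M.E →
      (M.Indep I ↔ LinearIndependent (ZMod 2) fun x : {y // y ∈ I} => ρ x.1)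

/-- Graphic matroid: isomorphic to the cycle matroid of a graph. -/
def IsGraphic (M : FinMatroid β) : Prop :=
  ∃ (k : ℕ) (G : SimpleGraph (Fin k)) (φ : β → Sym2 (Fin k)),
    Set.BijOn φ (M.E : Set β) G.edgeSet ∧
    ∀ I : Finset β, I ⊆ M.E →
      (M.Indep I ↔ ∀ Γ : Finset (Sym2 (Fin k)), IsCircuitSet G Γ →
        ¬ (Γ : Set (Sym2 (Fin k))) ⊆ φ '' (I : Set β))

end FinMatroid

/-- `ψ` line-preservingly models the PLS `S` by the matroid `M`: a bijection from the
points onto the ground set taking each line to a dependent set. -/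
def LinePresMatroid {α β : Type*} (S : PLS α) (M : FinMatroid β) (ψ : α → β) : Prop :=
  Set.BijOn ψ (S.J : Set α) (M.E : Set β) ∧ ∀ ℓ ∈ S.Λ, ¬ M.Indep (ℓ.image ψ)

/-- Graph-trigger: every simple binary matroid that line-preservingly rank-models `S`
is graphic. -/
def PLS.GraphTrigger {α : Type*} (S : PLS α) : Prop :=
  ∀ (β : Type) (M : FinMatroid β) (ψ : α → β),
    M.IsSimple → M.IsBinary → LinePresMatroid S M ψ → (M.rk : ℤ) = S.rk → M.IsGraphic

/-! ### Lines of modular lattices, MoPLSes, lattice-modeling -/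

/-- All pairs of distinct elements of `m` have the same join. -/
def ConstJoin {L : Type*} [Lattice L] (m : Finset L) : Prop :=
  ∀ p ∈ m, ∀ q ∈ m, ∀ p' ∈ m, ∀ q' ∈ m, p ≠ q → p' ≠ q' → p ⊔ q = p' ⊔ q'

/-- A line of a modular lattice: a 3-element subset of `J(L)` with constant pairwise
join, maximal with this property. -/
def IsLine (L : Type*) [Lattice L] [Fintype L] (ℓ : Finset L) : Prop :=
  ℓ ⊆ JFinset L ∧ ℓ.card = 3 ∧ ConstJoin ℓ ∧
    ∀ m : Finset L, m ⊆ JFinset L → ℓ ⊆ m → ConstJoin m → m = ℓ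

/-- The join of a line. -/
def lineJoin {L : Type*} [Lattice L] [BoundedOrder L] (ℓ : Finset L) : L := ℓ.sup id

/-- A MoPLS of `L`: the PLS on `J(L)` whose lines form a maximal family of pairwise
inequivalent lines of `L`. -/
def IsMoPLS (L : Type*) [Lattice L] [BoundedOrder L] [Fintype L] (S : PLS L) : Prop :=
  S.J = JFinset L ∧ (∀ ℓ ∈ S.Λ, IsLine L ℓ) ∧
    (∀ ℓ ∈ S.Λ, ∀ ℓ' ∈ S.Λ, ℓ ≠ ℓ' → lineJoin ℓ ≠ lineJoin ℓ') ∧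
    ∀ m : Finset L, IsLine L m → ∃ ℓ ∈ S.Λ, lineJoin ℓ = lineJoin m

/-- A graph lattice-models a finite lattice `L` via `φ`: `φ` is a bijection from
`J(L)` onto the edge set, all sets `φ(J(a))` are closed in the cycle matroid, and the
rank of the cycle matroid equals the height of `L`. -/
def LatticeModelsGraph (L : Type*) [Lattice L] [BoundedOrder L] [Fintype L]
    {V : Type*} [Fintype V] (G : SimpleGraph V) (φ : L → Sym2 V) : Prop :=
  Set.BijOn φ (JFinset L : Set L) G.edgeSet ∧
    (∀ a : L, graphCl G ((Jle a).image φ) = (((Jle a).image φ : Finset (Sym2 V)) : Set (Sym2 V))) ∧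
    graphRank G = latHeight L


/-! ### Auxiliary lemmas for statement_10 -/

section BMPLAux

lemma third_point {α : Type} {ℓ : Finset α} (h3 : ℓ.card = 3) {a b : α}
    (ha : a ∈ ℓ) (hb : b ∈ ℓ) (hab : a ≠ b) :
    ∃ c, c ∈ ℓ ∧ c ≠ a ∧ c ≠ b ∧ ℓ = {a, b, c} := by
  classical
  have hsub : ({a, b} : Finset α) ⊆ ℓ := by
    intro x hx
    rcases Finset.mem_insert.mp hx with rfl | hx
    · exact ha
    · rcases Finset.mem_singleton.mp hx with rfl
      exact hb
  have hcard2 : ({a, b} : Finset α).card = 2 := Finset.card_pair hab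
  have hdiff : (ℓ \ {a, b}).card = 1 := by
    rw [Finset.card_sdiff_of_subset hsub, hcard2, h3]
  obtain ⟨c, hc⟩ := Finset.card_eq_one.mp hdiff
  have hcmem : c ∈ ℓ \ ({a, b} : Finset α) := hc ▸ Finset.mem_singleton_self c
  rw [Finset.mem_sdiff, Finset.mem_insert, Finset.mem_singleton] at hcmem
  push_neg at hcmem
  refine ⟨c, hcmem.1, hcmem.2.1, hcmem.2.2, ?_⟩
  apply Finset.eq_of_subset_of_card_le
  · intro x hx
    by_cases hxa : x = a
    · subst hxa; simp
    by_cases hxb : x = b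
    · subst hxb; simp
    have : x ∈ ℓ \ ({a, b} : Finset α) := by
      rw [Finset.mem_sdiff, Finset.mem_insert, Finset.mem_singleton]
      exact ⟨hx, fun h => h.elim hxa hxb⟩
    rw [hc, Finset.mem_singleton] at this
    subst this; simp
  · rw [h3]
    apply le_trans (Finset.card_insert_le _ _)
    have := Finset.card_insert_le b ({c} : Finset α)
    simp only [Finset.card_singleton] at this ⊢
    omega

lemma inter_sing {α : Type} (S : PLS α) {ℓ ℓ' : Finset α} (hℓ : ℓ ∈ S.Λ) (hℓ' : ℓ' ∈ S.Λ)
    (hne : ℓ ≠ ℓ') {x : α} (hx : x ∈ ℓ) (hx' : x ∈ ℓ') : ℓ ∩ ℓ' = {x} := by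
  have hcard := S.line_inter ℓ hℓ ℓ' hℓ' hne
  rw [Finset.eq_singleton_iff_unique_mem]
  refine ⟨Finset.mem_inter.mpr ⟨hx, hx'⟩, fun y hy => ?_⟩
  exact Finset.card_le_one.mp hcard y hy x (Finset.mem_inter.mpr ⟨hx, hx'⟩)

lemma triangle_edge {V : Type} {G : SimpleGraph V} {T : Finset (Sym2 V)}
    (hT : IsTriangle G T) {e : Sym2 V} (he : e ∈ T) :
    ∃ x y z : V, x ≠ y ∧ x ≠ z ∧ y ≠ z ∧ e = s(x, y) ∧ T = {s(x, y), s(x, z), s(y, z)} := by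
  obtain ⟨a, b, c, hab, hbc, hac, rfl⟩ := hT
  have hab' := hab.ne
  have hbc' := hbc.ne
  have hac' := hac.ne
  simp only [Finset.mem_insert, Finset.mem_singleton] at he
  have swbc : s(b, c) = s(c, b) := Sym2.eq_swap
  have swab : s(a, b) = s(b, a) := Sym2.eq_swap
  have swac : s(a, c) = s(c, a) := Sym2.eq_swap
  rcases he with rfl | rfl | rfl
  · refine ⟨a, b, c, hab', hac', hbc', rfl, ?_⟩
    rw [Finset.pair_comm (s(b,c)) (s(a,c))]
  · refine ⟨b, c, a, hbc', fun h => hab' h.symm, fun h => hac' h.symm, rfl, ?_⟩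
    rw [swab, swac]
    ext w
    simp only [Finset.mem_insert, Finset.mem_singleton]
    tauto
  · refine ⟨a, c, b, hac', hab', fun h => hbc' h.symm, rfl, ?_⟩
    rw [swbc]
    ext w
    simp only [Finset.mem_insert, Finset.mem_singleton]
    tauto

lemma triangle_pair {V : Type} {G : SimpleGraph V} {T : Finset (Sym2 V)}
    (hT : IsTriangle G T) {e f : Sym2 V} (he : e ∈ T) (hf : f ∈ T) (hef : e ≠ f) :
    ∃ h u v : V, h ≠ u ∧ h ≠ v ∧ u ≠ v ∧ e = s(h, u) ∧ f = s(h, v) ∧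
      T = {s(h, u), s(h, v), s(u, v)} := by
  obtain ⟨x, y, z, hxy, hxz, hyz, rfl, hTeq⟩ := triangle_edge hT he
  subst hTeq
  simp only [Finset.mem_insert, Finset.mem_singleton] at hf
  rcases hf with rfl | rfl | rfl
  · exact absurd rfl hef
  · exact ⟨x, y, z, hxy, hxz, hyz, rfl, rfl, rfl⟩
  · refine ⟨y, x, z, fun h => hxy h.symm, hyz, hxz, Sym2.eq_swap, rfl, ?_⟩
    have swxy : s(x, y) = s(y, x) := Sym2.eq_swap
    rw [swxy]
    ext w
    simp only [Finset.mem_insert, Finset.mem_singleton]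
    tauto

lemma triangle_share {V : Type} {G : SimpleGraph V} {T : Finset (Sym2 V)}
    (hT : IsTriangle G T) {e f : Sym2 V} (he : e ∈ T) (hf : f ∈ T) :
    ∃ v : V, v ∈ e ∧ v ∈ f := by
  by_cases hef : e = f
  · subst hef
    obtain ⟨x, y, z, _, _, _, rfl, _⟩ := triangle_edge hT he
    exact ⟨x, by simp, by simp⟩
  · obtain ⟨h, u, v, _, _, _, rfl, rfl, _⟩ := triangle_pair hT he hf hef
    exact ⟨h, by simp, by simp⟩

lemma tri_ext {V : Type} {G : SimpleGraph V} {T T' : Finset (Sym2 V)}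
    (hT' : IsTriangle G T') {h u v : V}
    (hTeq : T = {s(h, u), s(h, v), s(u, v)}) (hhv : h ≠ v) (huv : u ≠ v)
    (hshared : s(h, u) ∈ T') (hint : T ∩ T' = {s(h, u)}) :
    ∃ w, w ≠ h ∧ w ≠ u ∧ w ≠ v ∧ T' = {s(h, u), s(h, w), s(u, w)} := by
  obtain ⟨x, y, z, hxy, hxz, hyz, heq, hT'eq⟩ := triangle_edge hT' hshared
  rw [Sym2.eq_iff] at heq
  rcases heq with ⟨hhx, huy⟩ | ⟨hhy, hux⟩
  · subst hhx; subst huy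
    refine ⟨z, fun hh => hxz hh.symm, fun hh => hyz hh.symm, ?_, hT'eq⟩
    intro hzv
    subst hzv
    have hmem : s(h, z) ∈ T ∩ T' := by
      rw [hTeq, hT'eq]
      exact Finset.mem_inter.mpr ⟨by simp, by simp⟩
    rw [hint, Finset.mem_singleton, Sym2.eq_iff] at hmem
    rcases hmem with ⟨-, hvu⟩ | ⟨hhu, hvh⟩
    · exact huv hvu.symm
    · exact hhv hvh.symm
  · subst hhy; subst hux
    refine ⟨z, fun hh => hyz hh.symm, fun hh => hxz hh.symm, ?_, ?_⟩
    · intro hzv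
      subst hzv
      have hmem : s(u, z) ∈ T ∩ T' := by
        rw [hTeq, hT'eq]
        exact Finset.mem_inter.mpr ⟨by simp, by simp⟩
      rw [hint, Finset.mem_singleton, Sym2.eq_iff] at hmem
      rcases hmem with ⟨huh, -⟩ | ⟨-, hvh⟩
      · exact hxy huh
      · exact hhv hvh.symm
    · rw [hT'eq]
      have sw1 : s(u, h) = s(h, u) := Sym2.eq_swap
      rw [sw1]
      ext w
      simp only [Finset.mem_insert, Finset.mem_singleton]
      tauto

lemma img_inter {α V : Type} {J : Finset α} {ψ : α → Sym2 V}
    (hinj : Set.InjOn ψ (J : Set α)) {ℓ ℓ' : Finset α} (hℓ : ℓ ⊆ J) (hℓ' : ℓ' ⊆ J) :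
    (ℓ.image ψ) ∩ (ℓ'.image ψ) = (ℓ ∩ ℓ').image ψ := by
  ext e
  simp only [Finset.mem_image, Finset.mem_inter]
  constructor
  · rintro ⟨⟨x, hx, rfl⟩, ⟨y, hy, hyx⟩⟩
    have : y = x := hinj (by exact_mod_cast hℓ' hy) (by exact_mod_cast hℓ hx) hyx
    subst this
    exact ⟨y, ⟨hx, hy⟩, rfl⟩
  · rintro ⟨x, ⟨hx, hx'⟩, rfl⟩
    exact ⟨⟨x, hx, rfl⟩, ⟨x, hx', rfl⟩⟩

end BMPLAux

lemma link_contradiction {α V : Type} (S : PLS α) {G : SimpleGraph V} {ψ : α → Sym2 V}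
    (hinj : Set.InjOn ψ (S.J : Set α))
    (htri : ∀ ℓ ∈ S.Λ, IsTriangle G (ℓ.image ψ))
    (P : PLSPath α) (hPΛ : P.In S.Λ)
    (Cst : Finset α) (hCstJ : Cst ⊆ S.J)
    (hint : P.ptSet ∩ Cst = {P.first, P.last})
    (hdisj : ∀ v : V, v ∈ ψ P.first → v ∈ ψ P.last → False)
    (hwheel : ∀ c : V, c ∈ ψ P.last → ∀ a b : V, ψ P.first = s(a, b) →
        s(a, c) ∈ Cst.image ψ ∨ s(b, c) ∈ Cst.image ψ)
    (hn : P.n = 2 ∨ P.n = 3) : False := by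
  have hfirst : P.first = P.p 0 := rfl
  rcases hn with hn2 | hn3
  · -- one-line link
    have hlast : P.last = P.p 1 := by rw [PLSPath.last, hn2]
    have hline0 : P.line 0 ∈ S.Λ := hPΛ 0 (by omega)
    have htri0 := htri _ hline0
    have he : ψ P.first ∈ (P.line 0).image ψ :=
      Finset.mem_image_of_mem ψ (P.p_mem_left 0 (by omega))
    have hf : ψ P.last ∈ (P.line 0).image ψ := by
      rw [hlast]
      exact Finset.mem_image_of_mem ψ (P.p_mem_right 0 (by omega))
    obtain ⟨v, hv1, hv2⟩ := triangle_share htri0 he hf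
    exact hdisj v hv1 hv2
  · -- two-line link
    have hlast : P.last = P.p 2 := by rw [PLSPath.last, hn3]
    have hline0 : P.line 0 ∈ S.Λ := hPΛ 0 (by omega)
    have hline1 : P.line 1 ∈ S.Λ := hPΛ 1 (by omega)
    have hline0J : P.line 0 ⊆ S.J := S.line_sub _ hline0
    have hline1J : P.line 1 ⊆ S.J := S.line_sub _ hline1
    have hp0mem : P.p 0 ∈ P.line 0 := P.p_mem_left 0 (by omega)
    have hp1mem : P.p 1 ∈ P.line 0 := P.p_mem_right 0 (by omega)
    have hp1mem' : P.p 1 ∈ P.line 1 := P.p_mem_left 1 (by omega)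
    have hp2mem : P.p 2 ∈ P.line 1 := P.p_mem_right 1 (by omega)
    have hp01 : P.p 0 ≠ P.p 1 := P.p_ne 0 (by omega)
    have hp12 : P.p 1 ≠ P.p 2 := P.p_ne 1 (by omega)
    have hp0J : P.p 0 ∈ S.J := hline0J hp0mem
    have hp1J : P.p 1 ∈ S.J := hline0J hp1mem
    have hp2J : P.p 2 ∈ S.J := hline1J hp2mem
    have htri0 := htri _ hline0
    have htri1 := htri _ hline1
    have hψ01 : ψ (P.p 0) ≠ ψ (P.p 1) := fun hh => hp01 (hinj hp0J hp1J hh)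
    have hψ12 : ψ (P.p 1) ≠ ψ (P.p 2) := fun hh => hp12 (hinj hp1J hp2J hh)
    obtain ⟨h, u, v, hhu, hhv, huv, heq, hx1eq, hT0eq⟩ :=
      triangle_pair htri0 (Finset.mem_image_of_mem ψ hp0mem)
        (Finset.mem_image_of_mem ψ hp1mem) hψ01
    -- third point of line 0
    obtain ⟨s1, hs1mem, hs1f, hs1x, hline0eq⟩ :=
      third_point (S.line_card _ hline0) hp0mem hp1mem hp01
    have hs1J : s1 ∈ S.J := hline0J hs1mem
    have hψs1 : ψ s1 = s(u, v) := by
      have hmem : ψ s1 ∈ (P.line 0).image ψ := Finset.mem_image_of_mem ψ hs1mem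
      rw [hT0eq] at hmem
      simp only [Finset.mem_insert, Finset.mem_singleton] at hmem
      rcases hmem with hh | hh | hh
      · exact absurd (hinj hs1J hp0J (hh.trans heq.symm)) hs1f
      · exact absurd (hinj hs1J hp1J (hh.trans hx1eq.symm)) hs1x
      · exact hh
    -- the second line contains ψ (P.p 1) and ψ (P.p 2); they share a vertex
    obtain ⟨w, hw1, hw2⟩ := triangle_share htri1 (Finset.mem_image_of_mem ψ hp1mem')
      (Finset.mem_image_of_mem ψ hp2mem)
    rw [hx1eq, Sym2.mem_iff] at hw1
    have hwlast : w ∈ ψ P.last := by rw [hlast]; exact hw2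
    rcases hw1 with rfl | rfl
    · -- w = h, but h ∈ ψ first
      refine hdisj w ?_ hwlast
      rw [hfirst, heq]
      simp
    · -- w = v
      have hkey := hwheel w hwlast h u (by rw [hfirst]; exact heq)
      have hx1not : P.p 1 ∉ Cst := by
        intro hmem
        have : P.p 1 ∈ P.ptSet ∩ Cst := by
          refine Finset.mem_inter.mpr ⟨?_, hmem⟩
          refine Finset.mem_biUnion.mpr ⟨0, ?_, hp1mem⟩
          simp [hn3]
        rw [hint] at this
        simp only [Finset.mem_insert, Finset.mem_singleton] at this
        rcases this with hh | hh
        · exact hp01 (hfirst ▸ hh.symm)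
        · exact hp12 (hlast ▸ hh)
      have hs1cases : s1 ∉ Cst ∨ s1 = P.last := by
        by_cases hmem : s1 ∈ Cst
        · right
          have : s1 ∈ P.ptSet ∩ Cst := by
            refine Finset.mem_inter.mpr ⟨?_, hmem⟩
            refine Finset.mem_biUnion.mpr ⟨0, ?_, hs1mem⟩
            simp [hn3]
          rw [hint] at this
          simp only [Finset.mem_insert, Finset.mem_singleton] at this
          rcases this with hh | hh
          · exact absurd hh hs1f
          · exact hh
        · left; exact hmem
      rcases hkey with hk | hk
      · -- s(h, w) = ψ (P.p 1) ∈ image of Cst : P.p 1 ∈ Cst, contradiction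
        rw [← hx1eq] at hk
        obtain ⟨y, hy, hyeq⟩ := Finset.mem_image.mp hk
        have : y = P.p 1 := hinj (hCstJ hy) hp1J hyeq
        exact hx1not (this ▸ hy)
      · -- s(u, w) = ψ s1 ∈ image of Cst
        rw [← hψs1] at hk
        obtain ⟨y, hy, hyeq⟩ := Finset.mem_image.mp hk
        have hys1 : y = s1 := hinj (hCstJ hy) hs1J hyeq
        subst hys1
        rcases hs1cases with hbad | hlasteq
        · exact hbad hy
        · -- s1 = P.last : then u ∈ ψ P.last and u ∈ ψ P.first, contradiction
          refine hdisj u ?_ ?_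
          · rw [hfirst, heq]; simp
          · rw [← hlasteq, hψs1]; simp

lemma comp1 {α : Type} (S : PLS α) (hsg : S.SmallGirth) (P : PLSPath α) (hPΛ : P.In S.Λ)
    (C : PLSCycle α) (hint : P.ptSet ∩ C.cptSet = {P.first, P.last})
    (ℓr ℓc : Finset α) (hrΛ : ℓr ∈ S.Λ) (hcΛ : ℓc ∈ S.Λ)
    (hrC : ℓr ⊆ C.cptSet) (pr z : α)
    (hlast_r : P.last ∈ ℓr) (hpr_r : pr ∈ ℓr) (hlpr : P.last ≠ pr)
    (hpr_c : pr ∈ ℓc) (hfirst_c : P.first ∈ ℓc)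
    (hfirst_r : P.first ∉ ℓr)
    (hprC : pr ∈ C.cptSet) (hprf : pr ≠ P.first) (hprl : pr ≠ P.last)
    (hz_c : z ∈ ℓc) (hz_r : z ∉ ℓr) (hzC : z ∈ C.cptSet) (hzf : z ≠ P.first)
    (hzl : z ≠ P.last) : P.n ≤ 3 := by
  have h2 := P.two_le
  -- membership in P.ptSet
  have hptSet : ∀ i, i + 1 < P.n → ∀ x ∈ P.line i, x ∈ P.ptSet := by
    intro i hi x hx
    exact Finset.mem_biUnion.mpr ⟨i, Finset.mem_range.mpr (by omega), hx⟩
  have hPC : ∀ i, i + 1 < P.n → ∀ x, x ∈ P.line i → x ∈ C.cptSet →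
      x = P.first ∨ x = P.last := by
    intro i hi x hx hxC
    have : x ∈ P.ptSet ∩ C.cptSet := Finset.mem_inter.mpr ⟨hptSet i hi x hx, hxC⟩
    rw [hint] at this
    simpa using this
  have hlastp : P.last = P.p (P.n - 1) := rfl
  have hfirstp : P.first = P.p 0 := rfl
  -- the composite cycle
  set D : PLSCycle α :=
    { n := P.n + 1
      two_le := by omega
      p := fun i => if i < P.n then P.p i else pr
      line := fun i => if i + 1 < P.n then P.line i else ℓr
      p_mem_left := by
        intro i hi
        by_cases hc : i + 1 < P.n
        · simp only [if_pos hc, if_pos (show i < P.n by omega)]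
          exact P.p_mem_left i hc
        · have hieq : i = P.n - 1 := by omega
          simp only [if_neg hc, if_pos (show i < P.n by omega)]
          rw [hieq, ← hlastp]
          exact hlast_r
      p_mem_right := by
        intro i hi
        by_cases hc : i + 1 < P.n
        · simp only [if_pos hc]
          exact P.p_mem_right i hc
        · simp only [if_neg hc]
          exact hpr_r
      p_ne := by
        intro i hi
        by_cases hc : i + 1 < P.n
        · simp only [if_pos hc, if_pos (show i < P.n by omega)]
          exact P.p_ne i hc
        · have hieq : i = P.n - 1 := by omega
          simp only [if_neg hc, if_pos (show i < P.n by omega)]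
          rw [hieq, ← hlastp]
          exact hlpr
      lines_ne := by
        intro i j hij hj
        by_cases hcj : j + 1 < P.n
        · simp only [if_pos hcj, if_pos (show i + 1 < P.n by omega)]
          exact P.lines_ne i j hij hcj
        · simp only [if_neg hcj, if_pos (show i + 1 < P.n by omega)]
          intro hEq
          have hprmem : pr ∈ P.line i := hEq ▸ hpr_r
          rcases hPC i (by omega) pr hprmem hprC with hh | hh
          · exact hprf hh
          · exact hprl hh
      lines_inter_iff := by
        intro i j hij hj
        by_cases hcj : j + 1 < P.n
        · simp only [if_pos hcj, if_pos (show i + 1 < P.n by omega)]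
          exact P.lines_inter_iff i j hij hcj
        · have hi1 : i + 1 < P.n := by omega
          simp only [if_neg hcj, if_pos hi1]
          constructor
          · rintro ⟨x, hx⟩
            rw [Finset.mem_inter] at hx
            rcases hPC i hi1 x hx.1 (hrC hx.2) with rfl | rfl
            · exact absurd hx.2 hfirst_r
            · -- P.last ∈ P.line i
              by_cases hii : i + 1 = P.n - 1
              · omega
              · -- i + 1 < P.n - 1
                have hilt : i + 1 < P.n - 1 := by omega
                have hlastmem : P.last ∈ P.line (P.n - 2) := by
                  rw [hlastp, show P.n - 1 = (P.n - 2) + 1 by omega]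
                  exact P.p_mem_right (P.n - 2) (by omega)
                have hne : (P.line i ∩ P.line (P.n - 2)).Nonempty :=
                  ⟨P.last, Finset.mem_inter.mpr ⟨hx.1, hlastmem⟩⟩
                have := (P.lines_inter_iff i (P.n - 2) (by omega) (by omega)).mp hne
                -- P.n - 2 = i + 1, so lines i and i+1 consecutive; intersection is a junction
                have hiconsec : P.n - 2 = i + 1 := this
                have hjunc : P.line i ∩ P.line (i + 1) = {P.p (i + 1)} := by
                  apply inter_sing S (hPΛ i hi1) (hPΛ (i + 1) (by omega))
                  · exact P.lines_ne i (i + 1) (by omega) (by omega)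
                  · exact P.p_mem_right i hi1
                  · exact P.p_mem_left (i + 1) (by omega)
                have hlmem : P.last ∈ P.line i ∩ P.line (i + 1) := by
                  rw [← hiconsec] at *
                  exact Finset.mem_inter.mpr ⟨hx.1, hlastmem⟩
                rw [hjunc, Finset.mem_singleton] at hlmem
                have := P.p_ne (i + 1) (by omega)
                rw [hlastp, show P.n - 1 = (i+1) + 1 by omega] at hlmem
                exact absurd hlmem.symm this
          · intro hji
            refine ⟨P.last, Finset.mem_inter.mpr ⟨?_, hlast_r⟩⟩
            rw [hlastp, show P.n - 1 = i + 1 by omega]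
            exact P.p_mem_right i hi1
      closing := ℓc
      closing_last := by
        simp only [Nat.add_sub_cancel, if_neg (lt_irrefl P.n)]
        exact hpr_c
      closing_first := by
        simp only [if_pos (show 0 < P.n by omega)]
        exact hfirst_c
      closing_new := by
        refine ⟨z, hz_c, ?_⟩
        intro i hi
        by_cases hc : i + 1 < P.n
        · simp only [if_pos hc]
          intro hzmem
          rcases hPC i hc z hzmem hzC with hh | hh
          · exact hzf hh
          · exact hzl hh
        · simp only [if_neg hc]
          exact hz_r }
  have hDin : D.In S.Λ := by
    constructor
    · intro i hi
      show (if i + 1 < P.n then P.line i else ℓr) ∈ S.Λ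
      by_cases hc : i + 1 < P.n
      · simp only [if_pos hc]; exact hPΛ i hc
      · simp only [if_neg hc]; exact hrΛ
    · exact hcΛ
  have := hsg D hDin
  have hDn : D.n = P.n + 1 := rfl
  omega

lemma comp2 {α : Type} (S : PLS α) (hsg : S.SmallGirth) (P : PLSPath α) (hPΛ : P.In S.Λ)
    (C : PLSCycle α) (hint : P.ptSet ∩ C.cptSet = {P.first, P.last})
    (ℓr1 ℓr2 ℓc : Finset α) (hr1Λ : ℓr1 ∈ S.Λ) (hr2Λ : ℓr2 ∈ S.Λ) (hcΛ : ℓc ∈ S.Λ)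
    (hr1C : ℓr1 ⊆ C.cptSet) (hr2C : ℓr2 ⊆ C.cptSet) (pr1 pr2 z : α)
    (hlast_r1 : P.last ∈ ℓr1) (hpr1_r1 : pr1 ∈ ℓr1) (hlpr1 : P.last ≠ pr1)
    (hpr1_r2 : pr1 ∈ ℓr2) (hpr2_r2 : pr2 ∈ ℓr2) (hpr12 : pr1 ≠ pr2)
    (hpr2_c : pr2 ∈ ℓc) (hfirst_c : P.first ∈ ℓc)
    (hfirst_r1 : P.first ∉ ℓr1) (hfirst_r2 : P.first ∉ ℓr2) (hlast_r2 : P.last ∉ ℓr2)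
    (hpr2_r1 : pr2 ∉ ℓr1)
    (hpr1C : pr1 ∈ C.cptSet) (hpr1f : pr1 ≠ P.first) (hpr1l : pr1 ≠ P.last)
    (hpr2C : pr2 ∈ C.cptSet) (hpr2f : pr2 ≠ P.first) (hpr2l : pr2 ≠ P.last)
    (hz_c : z ∈ ℓc) (hz_r1 : z ∉ ℓr1) (hz_r2 : z ∉ ℓr2) (hzC : z ∈ C.cptSet)
    (hzf : z ≠ P.first) (hzl : z ≠ P.last) : P.n ≤ 2 := by
  have h2 := P.two_le
  have hptSet : ∀ i, i + 1 < P.n → ∀ x ∈ P.line i, x ∈ P.ptSet := by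
    intro i hi x hx
    exact Finset.mem_biUnion.mpr ⟨i, Finset.mem_range.mpr (by omega), hx⟩
  have hPC : ∀ i, i + 1 < P.n → ∀ x, x ∈ P.line i → x ∈ C.cptSet →
      x = P.first ∨ x = P.last := by
    intro i hi x hx hxC
    have : x ∈ P.ptSet ∩ C.cptSet := Finset.mem_inter.mpr ⟨hptSet i hi x hx, hxC⟩
    rw [hint] at this
    simpa using this
  have hlastp : P.last = P.p (P.n - 1) := rfl
  have hfirstp : P.first = P.p 0 := rfl
  set D : PLSCycle α :=
    { n := P.n + 2
      two_le := by omega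
      p := fun i => if i < P.n then P.p i else if i = P.n then pr1 else pr2
      line := fun i => if i + 1 < P.n then P.line i else if i + 1 = P.n then ℓr1 else ℓr2
      p_mem_left := by
        intro i hi
        by_cases hc : i + 1 < P.n
        · simp only [if_pos hc, if_pos (show i < P.n by omega)]
          exact P.p_mem_left i hc
        · by_cases hc2 : i + 1 = P.n
          · simp only [if_neg hc, if_pos hc2, if_pos (show i < P.n by omega)]
            rw [show i = P.n - 1 by omega, ← hlastp]
            exact hlast_r1
          · have hieq : i = P.n := by omega
            simp only [if_neg hc, if_neg hc2, if_neg (show ¬ i < P.n by omega), if_pos hieq]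
            exact hpr1_r2
      p_mem_right := by
        intro i hi
        by_cases hc : i + 1 < P.n
        · simp only [if_pos hc]
          exact P.p_mem_right i hc
        · by_cases hc2 : i + 1 = P.n
          · simp only [if_neg hc, if_pos hc2, if_neg (show ¬ i + 1 < P.n by omega),
              if_pos hc2]
            exact hpr1_r1
          · simp only [if_neg hc, if_neg hc2, if_neg (show ¬ i + 1 < P.n by omega),
              if_neg (show ¬ i + 1 = P.n by omega)]
            exact hpr2_r2
      p_ne := by
        intro i hi
        by_cases hc : i + 1 < P.n
        · simp only [if_pos hc, if_pos (show i < P.n by omega)]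
          exact P.p_ne i hc
        · by_cases hc2 : i + 1 = P.n
          · simp only [if_pos (show i < P.n by omega), if_neg (show ¬ i + 1 < P.n by omega),
              if_pos hc2]
            rw [show i = P.n - 1 by omega, ← hlastp]
            exact hlpr1
          · have hieq : i = P.n := by omega
            simp only [if_neg (show ¬ i < P.n by omega), if_pos hieq,
              if_neg (show ¬ i + 1 < P.n by omega), if_neg (show ¬ i + 1 = P.n by omega)]
            exact hpr12
      lines_ne := by
        intro i j hij hj
        by_cases hcj : j + 1 < P.n
        · simp only [if_pos hcj, if_pos (show i + 1 < P.n by omega)]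
          exact P.lines_ne i j hij hcj
        · by_cases hcj2 : j + 1 = P.n
          · simp only [if_neg hcj, if_pos hcj2, if_pos (show i + 1 < P.n by omega)]
            intro hEq
            have hprmem : pr1 ∈ P.line i := hEq ▸ hpr1_r1
            rcases hPC i (by omega) pr1 hprmem hpr1C with hh | hh
            · exact hpr1f hh
            · exact hpr1l hh
          · -- j = P.n, line j = ℓr2
            simp only [if_neg hcj, if_neg hcj2]
            by_cases hci : i + 1 < P.n
            · simp only [if_pos hci]
              intro hEq
              have hprmem : pr2 ∈ P.line i := hEq ▸ hpr2_r2
              rcases hPC i hci pr2 hprmem hpr2C with hh | hh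
              · exact hpr2f hh
              · exact hpr2l hh
            · have hci2 : i + 1 = P.n := by omega
              simp only [if_neg hci, if_pos hci2]
              intro hEq
              exact hpr2_r1 (hEq ▸ hpr2_r2)
      lines_inter_iff := by
        intro i j hij hj
        by_cases hcj : j + 1 < P.n
        · simp only [if_pos hcj, if_pos (show i + 1 < P.n by omega)]
          exact P.lines_inter_iff i j hij hcj
        · by_cases hcj2 : j + 1 = P.n
          · have hi1 : i + 1 < P.n := by omega
            simp only [if_neg hcj, if_pos hcj2, if_pos hi1]
            constructor
            · rintro ⟨x, hx⟩
              rw [Finset.mem_inter] at hx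
              rcases hPC i hi1 x hx.1 (hr1C hx.2) with rfl | rfl
              · exact absurd hx.2 hfirst_r1
              · by_cases hii : i + 1 = P.n - 1
                · omega
                · have hilt : i + 1 < P.n - 1 := by omega
                  have hlastmem : P.last ∈ P.line (P.n - 2) := by
                    rw [hlastp, show P.n - 1 = (P.n - 2) + 1 by omega]
                    exact P.p_mem_right (P.n - 2) (by omega)
                  have hne : (P.line i ∩ P.line (P.n - 2)).Nonempty :=
                    ⟨P.last, Finset.mem_inter.mpr ⟨hx.1, hlastmem⟩⟩
                  have hiconsec : P.n - 2 = i + 1 :=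
                    (P.lines_inter_iff i (P.n - 2) (by omega) (by omega)).mp hne
                  have hjunc : P.line i ∩ P.line (i + 1) = {P.p (i + 1)} := by
                    apply inter_sing S (hPΛ i hi1) (hPΛ (i + 1) (by omega))
                    · exact P.lines_ne i (i + 1) (by omega) (by omega)
                    · exact P.p_mem_right i hi1
                    · exact P.p_mem_left (i + 1) (by omega)
                  have hlmem : P.last ∈ P.line i ∩ P.line (i + 1) := by
                    rw [← hiconsec] at *
                    exact Finset.mem_inter.mpr ⟨hx.1, hlastmem⟩
                  rw [hjunc, Finset.mem_singleton] at hlmem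
                  have := P.p_ne (i + 1) (by omega)
                  rw [hlastp, show P.n - 1 = (i+1) + 1 by omega] at hlmem
                  exact absurd hlmem.symm this
            · intro hji
              refine ⟨P.last, Finset.mem_inter.mpr ⟨?_, hlast_r1⟩⟩
              rw [hlastp, show P.n - 1 = i + 1 by omega]
              exact P.p_mem_right i hi1
          · -- j = P.n + 1 - 1, line j = ℓr2
            simp only [if_neg hcj, if_neg hcj2]
            by_cases hci : i + 1 < P.n
            · simp only [if_pos hci]
              constructor
              · rintro ⟨x, hx⟩
                rw [Finset.mem_inter] at hx
                rcases hPC i hci x hx.1 (hr2C hx.2) with rfl | rfl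
                · exact absurd hx.2 hfirst_r2
                · exact absurd hx.2 hlast_r2
              · intro hji; omega
            · have hci2 : i + 1 = P.n := by omega
              simp only [if_neg hci, if_pos hci2]
              constructor
              · intro _; omega
              · intro _
                exact ⟨pr1, Finset.mem_inter.mpr ⟨hpr1_r1, hpr1_r2⟩⟩
      closing := ℓc
      closing_last := by
        have : P.n + 2 - 1 = P.n + 1 := by omega
        rw [this]
        simp only [if_neg (show ¬ P.n + 1 < P.n by omega),
          if_neg (show ¬ P.n + 1 = P.n by omega)]
        exact hpr2_c
      closing_first := by
        simp only [if_pos (show 0 < P.n by omega)]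
        exact hfirst_c
      closing_new := by
        refine ⟨z, hz_c, ?_⟩
        intro i hi
        by_cases hc : i + 1 < P.n
        · simp only [if_pos hc]
          intro hzmem
          rcases hPC i hc z hzmem hzC with hh | hh
          · exact hzf hh
          · exact hzl hh
        · by_cases hc2 : i + 1 = P.n
          · simp only [if_neg hc, if_pos hc2]
            exact hz_r1
          · simp only [if_neg hc, if_neg hc2]
            exact hz_r2 }
  have hDin : D.In S.Λ := by
    constructor
    · intro i hi
      show (if i + 1 < P.n then P.line i else if i + 1 = P.n then ℓr1 else ℓr2) ∈ S.Λ
      by_cases hc : i + 1 < P.n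
      · simp only [if_pos hc]; exact hPΛ i hc
      · by_cases hc2 : i + 1 = P.n
        · simp only [if_neg hc, if_pos hc2]; exact hr1Λ
        · simp only [if_neg hc, if_neg hc2]; exact hr2Λ
    · exact hcΛ
  have := hsg D hDin
  have hDn : D.n = P.n + 2 := rfl
  omega


lemma triple_swap12 {X : Type} [DecidableEq X] (x y z : X) :
    ({x, y, z} : Finset X) = {y, x, z} := by
  ext w
  simp only [Finset.mem_insert, Finset.mem_singleton]
  tauto

lemma triple_rot {X : Type} [DecidableEq X] (x y z : X) :
    ({x, y, z} : Finset X) = {y, z, x} := by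
  ext w
  simp only [Finset.mem_insert, Finset.mem_singleton]
  tauto

lemma mem3_resolve {X : Type} [DecidableEq X] {g e1 e2 e3 : X}
    (hg : g ∈ ({e1, e2, e3} : Finset X)) (h1 : g ≠ e1) (h2 : g ≠ e2) : g = e3 := by
  simp only [Finset.mem_insert, Finset.mem_singleton] at hg
  tauto

lemma mem3_resolve2 {X : Type} [DecidableEq X] {g e1 e2 e3 : X}
    (hg : g ∈ ({e1, e2, e3} : Finset X)) (h1 : g ≠ e1) : g = e2 ∨ g = e3 := by
  simp only [Finset.mem_insert, Finset.mem_singleton] at hg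
  tauto

lemma cline_mem_lambda {α : Type} {S : PLS α} {C : PLSCycle α} (hC : C.In S.Λ)
    {i : ℕ} (hi : i < C.n) : C.cline i ∈ S.Λ := by
  rw [PLSCycle.cline]
  by_cases hc : i + 1 < C.n
  · simp only [if_pos hc]; exact hC.1 i hc
  · simp only [if_neg hc]; exact hC.2

lemma cline_sub_cpt {α : Type} {C : PLSCycle α} {i : ℕ} (hi : i < C.n) :
    C.cline i ⊆ C.cptSet := fun x hx =>
  Finset.mem_biUnion.mpr ⟨i, Finset.mem_range.mpr hi, hx⟩

lemma cpt_sub_J {α : Type} {S : PLS α} {C : PLSCycle α} (hC : C.In S.Λ) :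
    C.cptSet ⊆ S.J := by
  intro x hx
  obtain ⟨i, hi, hxi⟩ := Finset.mem_biUnion.mp hx
  exact S.line_sub _ (cline_mem_lambda hC (Finset.mem_range.mp hi)) hxi

structure Wheel4Data {α V : Type} (S : PLS α) (ψ : α → Sym2 V) (C : PLSCycle α) where
  Q0 : α
  Q1 : α
  Q2 : α
  Q3 : α
  hub : V
  v0 : V
  v1 : V
  v2 : V
  v3 : V
  dh0 : hub ≠ v0
  dh1 : hub ≠ v1
  dh2 : hub ≠ v2
  dh3 : hub ≠ v3
  d01 : v0 ≠ v1
  d02 : v0 ≠ v2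
  d03 : v0 ≠ v3
  d12 : v1 ≠ v2
  d13 : v1 ≠ v3
  d23 : v2 ≠ v3
  cl0 : C.cline 0 = {C.p 0, C.p 1, Q0}
  cl1 : C.cline 1 = {C.p 1, C.p 2, Q1}
  cl2 : C.cline 2 = {C.p 2, C.p 3, Q2}
  cl3 : C.cline 3 = {C.p 3, C.p 0, Q3}
  psip0 : ψ (C.p 0) = s(hub, v0)
  psip1 : ψ (C.p 1) = s(hub, v1)
  psip2 : ψ (C.p 2) = s(hub, v2)
  psip3 : ψ (C.p 3) = s(hub, v3)
  psiq0 : ψ Q0 = s(v0, v1)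
  psiq1 : ψ Q1 = s(v1, v2)
  psiq2 : ψ Q2 = s(v2, v3)
  psiq3 : ψ Q3 = s(v3, v0)

set_option maxHeartbeats 1000000 in
lemma wheel4 {α V : Type} (S : PLS α) {G : SimpleGraph V} {ψ : α → Sym2 V}
    (hinj : Set.InjOn ψ (S.J : Set α))
    (htri : ∀ ℓ ∈ S.Λ, IsTriangle G (ℓ.image ψ))
    (C : PLSCycle α) (hC : C.In S.Λ) (hn : C.n = 4) :
    Nonempty (Wheel4Data S ψ C) := by
  have hcl0 : C.cline 0 = C.line 0 := if_pos (by omega)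
  have hcl1 : C.cline 1 = C.line 1 := if_pos (by omega)
  have hcl2 : C.cline 2 = C.line 2 := if_pos (by omega)
  have hcl3 : C.cline 3 = C.closing := if_neg (by omega)
  have hΛ0 : C.cline 0 ∈ S.Λ := cline_mem_lambda hC (by omega)
  have hΛ1 : C.cline 1 ∈ S.Λ := cline_mem_lambda hC (by omega)
  have hΛ2 : C.cline 2 ∈ S.Λ := cline_mem_lambda hC (by omega)
  have hΛ3 : C.cline 3 ∈ S.Λ := cline_mem_lambda hC (by omega)
  have hJ0 : C.cline 0 ⊆ S.J := S.line_sub _ hΛ0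
  have hJ1 : C.cline 1 ⊆ S.J := S.line_sub _ hΛ1
  have hJ2 : C.cline 2 ⊆ S.J := S.line_sub _ hΛ2
  have hJ3 : C.cline 3 ⊆ S.J := S.line_sub _ hΛ3
  -- junction memberships
  have hp0m0 : C.p 0 ∈ C.cline 0 := by rw [hcl0]; exact C.p_mem_left 0 (by omega)
  have hp1m0 : C.p 1 ∈ C.cline 0 := by rw [hcl0]; exact C.p_mem_right 0 (by omega)
  have hp1m1 : C.p 1 ∈ C.cline 1 := by rw [hcl1]; exact C.p_mem_left 1 (by omega)
  have hp2m1 : C.p 2 ∈ C.cline 1 := by rw [hcl1]; exact C.p_mem_right 1 (by omega)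
  have hp2m2 : C.p 2 ∈ C.cline 2 := by rw [hcl2]; exact C.p_mem_left 2 (by omega)
  have hp3m2 : C.p 3 ∈ C.cline 2 := by rw [hcl2]; exact C.p_mem_right 2 (by omega)
  have hp3m3 : C.p 3 ∈ C.cline 3 := by
    rw [hcl3]
    have := C.closing_last
    rwa [hn] at this
  have hp0m3 : C.p 0 ∈ C.cline 3 := by rw [hcl3]; exact C.closing_first
  -- line distinctness
  have hne01 : C.cline 0 ≠ C.cline 1 := by
    rw [hcl0, hcl1]; exact C.lines_ne 0 1 (by omega) (by omega)
  have hne02 : C.cline 0 ≠ C.cline 2 := by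
    rw [hcl0, hcl2]; exact C.lines_ne 0 2 (by omega) (by omega)
  have hne12 : C.cline 1 ≠ C.cline 2 := by
    rw [hcl1, hcl2]; exact C.lines_ne 1 2 (by omega) (by omega)
  obtain ⟨qf, hqfc, hqfn⟩ := C.closing_new
  have hne3 : ∀ i, i + 1 < C.n → C.line i ≠ C.closing := by
    intro i hi hEq
    exact hqfn i hi (hEq ▸ hqfc)
  have hne23 : C.cline 2 ≠ C.cline 3 := by
    rw [hcl2, hcl3]; exact hne3 2 (by omega)
  have hne03 : C.cline 0 ≠ C.cline 3 := by
    rw [hcl0, hcl3]; exact hne3 0 (by omega)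
  have hne13 : C.cline 1 ≠ C.cline 3 := by
    rw [hcl1, hcl3]; exact hne3 1 (by omega)
  -- empty intersection of opposite lines 0, 2
  have hint02 : C.cline 0 ∩ C.cline 2 = ∅ := by
    rw [hcl0, hcl2]
    rw [← Finset.not_nonempty_iff_eq_empty]
    intro hne
    have := (C.lines_inter_iff 0 2 (by omega) (by omega)).mp hne
    omega
  -- junction distinctness
  have hp01 : C.p 0 ≠ C.p 1 := C.p_ne 0 (by omega)
  have hp12 : C.p 1 ≠ C.p 2 := C.p_ne 1 (by omega)
  have hp23 : C.p 2 ≠ C.p 3 := C.p_ne 2 (by omega)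
  have hp02 : C.p 0 ≠ C.p 2 := by
    intro hEq
    have : C.p 0 ∈ C.cline 0 ∩ C.cline 2 :=
      Finset.mem_inter.mpr ⟨hp0m0, hEq ▸ hp2m2⟩
    rw [hint02] at this
    exact absurd this (Finset.notMem_empty _)
  have hp03 : C.p 0 ≠ C.p 3 := by
    intro hEq
    have : C.p 0 ∈ C.cline 0 ∩ C.cline 2 :=
      Finset.mem_inter.mpr ⟨hp0m0, hEq ▸ hp3m2⟩
    rw [hint02] at this
    exact absurd this (Finset.notMem_empty _)
  have hint12 : C.cline 1 ∩ C.cline 2 = {C.p 2} := inter_sing S hΛ1 hΛ2 hne12 hp2m1 hp2m2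
  have hp13 : C.p 1 ≠ C.p 3 := by
    intro hEq
    have : C.p 1 ∈ C.cline 1 ∩ C.cline 2 :=
      Finset.mem_inter.mpr ⟨hp1m1, hEq ▸ hp3m2⟩
    rw [hint12, Finset.mem_singleton] at this
    exact hp12 this
  have hint01 : C.cline 0 ∩ C.cline 1 = {C.p 1} := inter_sing S hΛ0 hΛ1 hne01 hp1m0 hp1m1
  have hint23 : C.cline 2 ∩ C.cline 3 = {C.p 3} := inter_sing S hΛ2 hΛ3 hne23 hp3m2 hp3m3
  have hint30 : C.cline 3 ∩ C.cline 0 = {C.p 0} := inter_sing S hΛ3 hΛ0 hne03.symm hp0m3 hp0m0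
  -- third points
  have hcard0 : (C.cline 0).card = 3 := S.line_card _ hΛ0
  have hcard1 : (C.cline 1).card = 3 := S.line_card _ hΛ1
  have hcard2 : (C.cline 2).card = 3 := S.line_card _ hΛ2
  have hcard3 : (C.cline 3).card = 3 := S.line_card _ hΛ3
  obtain ⟨Q0, hQ0m, hQ0p0, hQ0p1, hL0⟩ := third_point hcard0 hp0m0 hp1m0 hp01
  obtain ⟨Q1, hQ1m, hQ1p1, hQ1p2, hL1⟩ := third_point hcard1 hp1m1 hp2m1 hp12
  obtain ⟨Q2, hQ2m, hQ2p2, hQ2p3, hL2⟩ := third_point hcard2 hp2m2 hp3m2 hp23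
  obtain ⟨Q3, hQ3m, hQ3p3, hQ3p0, hL3⟩ := third_point hcard3 hp3m3 hp0m3 hp03.symm
  -- J memberships
  have hp0J : C.p 0 ∈ S.J := hJ0 hp0m0
  have hp1J : C.p 1 ∈ S.J := hJ0 hp1m0
  have hp2J : C.p 2 ∈ S.J := hJ1 hp2m1
  have hp3J : C.p 3 ∈ S.J := hJ2 hp3m2
  have hQ0J : Q0 ∈ S.J := hJ0 hQ0m
  have hQ1J : Q1 ∈ S.J := hJ1 hQ1m
  have hQ2J : Q2 ∈ S.J := hJ2 hQ2m
  have hQ3J : Q3 ∈ S.J := hJ3 hQ3m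
  have hψne : ∀ x ∈ S.J, ∀ y ∈ S.J, x ≠ y → ψ x ≠ ψ y := by
    intro x hx y hy hxy hEq
    exact hxy (hinj hx hy hEq)
  -- triangles
  have htri0 := htri _ hΛ0
  have htri1 := htri _ hΛ1
  have htri2 := htri _ hΛ2
  have htri3 := htri _ hΛ3
  -- triangle intersections
  have hT01 : (C.cline 0).image ψ ∩ (C.cline 1).image ψ = {ψ (C.p 1)} := by
    rw [img_inter hinj hJ0 hJ1, hint01, Finset.image_singleton]
  have hT12 : (C.cline 1).image ψ ∩ (C.cline 2).image ψ = {ψ (C.p 2)} := by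
    rw [img_inter hinj hJ1 hJ2, hint12, Finset.image_singleton]
  have hT02 : (C.cline 0).image ψ ∩ (C.cline 2).image ψ = ∅ := by
    rw [img_inter hinj hJ0 hJ2, hint02, Finset.image_empty]
  -- coordinatize T0
  obtain ⟨h, v0, v1, hhv0, hhv1, hv01, hψp0, hψp1, hT0⟩ :=
    triangle_pair htri0 (Finset.mem_image_of_mem ψ hp0m0) (Finset.mem_image_of_mem ψ hp1m0)
      (hψne _ hp0J _ hp1J hp01)
  have hψQ0 : ψ Q0 = s(v0, v1) := by
    refine mem3_resolve (hT0 ▸ Finset.mem_image_of_mem ψ hQ0m) ?_ ?_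
    · rw [← hψp0]; exact hψne _ hQ0J _ hp0J hQ0p0
    · rw [← hψp1]; exact hψne _ hQ0J _ hp1J hQ0p1
  -- extend along s(h, v1) to T1
  have hT0' : (C.cline 0).image ψ = {s(h, v1), s(h, v0), s(v1, v0)} := by
    have sw : s(v0, v1) = s(v1, v0) := Sym2.eq_swap
    rw [hT0, triple_swap12, sw]
  obtain ⟨u, huh, huv1, huv0, hT1⟩ := tri_ext htri1 hT0' hhv0 (fun hh => hv01 hh.symm)
    (by rw [← hψp1]; exact Finset.mem_image_of_mem ψ hp1m1) (by rw [hT01, hψp1])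
  -- determine ψ (C.p 2)
  have hψp2mem : ψ (C.p 2) ∈ ({s(h, v1), s(h, u), s(v1, u)} : Finset (Sym2 V)) :=
    hT1 ▸ Finset.mem_image_of_mem ψ hp2m1
  have hψp2cases : ψ (C.p 2) = s(h, u) ∨ ψ (C.p 2) = s(v1, u) := by
    refine mem3_resolve2 hψp2mem ?_
    rw [← hψp1]; exact hψne _ hp2J _ hp1J hp12.symm
  have hψp2 : ψ (C.p 2) = s(h, u) := by
    rcases hψp2cases with hgood | hbad
    · exact hgood
    · exfalso
      -- extend along s(v1, u) to T2
      have hT1' : (C.cline 1).image ψ = {s(v1, u), s(v1, h), s(u, h)} := by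
        have sw1 : s(h, v1) = s(v1, h) := Sym2.eq_swap
        have sw2 : s(h, u) = s(u, h) := Sym2.eq_swap
        rw [hT1, triple_rot, triple_rot, sw1, sw2]
      obtain ⟨w, hwv1, hwu, hwh, hT2⟩ := tri_ext htri2 hT1' (fun hh => hhv1 hh.symm)
        huh
        (by rw [← hbad]; exact Finset.mem_image_of_mem ψ hp2m2) (by rw [hT12, hbad])
      have hwv0 : w ≠ v0 := by
        intro hEq
        subst hEq
        have hmem : s(v1, w) ∈ (C.cline 0).image ψ ∩ (C.cline 2).image ψ := by
          refine Finset.mem_inter.mpr ⟨?_, ?_⟩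
          · rw [hT0']; simp
          · rw [hT2]; simp
        rw [hT02] at hmem
        exact absurd hmem (Finset.notMem_empty _)
      have hψp3mem : ψ (C.p 3) ∈ ({s(v1, u), s(v1, w), s(u, w)} : Finset (Sym2 V)) :=
        hT2 ▸ Finset.mem_image_of_mem ψ hp3m2
      have hψp3cases : ψ (C.p 3) = s(v1, w) ∨ ψ (C.p 3) = s(u, w) := by
        refine mem3_resolve2 hψp3mem ?_
        rw [← hbad]; exact hψne _ hp3J _ hp2J hp23.symm
      obtain ⟨t, ht3, ht0⟩ := triangle_share htri3 (Finset.mem_image_of_mem ψ hp3m3)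
        (Finset.mem_image_of_mem ψ hp0m3)
      rw [hψp0, Sym2.mem_iff] at ht0
      rcases hψp3cases with hc | hc <;> rw [hc, Sym2.mem_iff] at ht3
      · rcases ht3 with rfl | rfl <;> rcases ht0 with rfl | rfl
        · exact hhv1 rfl
        · exact hv01 rfl
        · exact hwh rfl
        · exact hwv0 rfl
      · rcases ht3 with rfl | rfl <;> rcases ht0 with rfl | rfl
        · exact huh rfl
        · exact huv0 rfl
        · exact hwh rfl
        · exact hwv0 rfl
  have huv0' : u ≠ v0 := by
    intro hEq
    have : ψ (C.p 0) = ψ (C.p 2) := by rw [hψp0, hψp2, hEq]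
    exact hp02 (hinj hp0J hp2J this)
  have hψQ1 : ψ Q1 = s(v1, u) := by
    refine mem3_resolve (hT1 ▸ Finset.mem_image_of_mem ψ hQ1m) ?_ ?_
    · rw [← hψp1]; exact hψne _ hQ1J _ hp1J hQ1p1
    · rw [← hψp2]; exact hψne _ hQ1J _ hp2J hQ1p2
  -- extend along s(h, u) to T2
  have hT1'' : (C.cline 1).image ψ = {s(h, u), s(h, v1), s(u, v1)} := by
    have sw : s(v1, u) = s(u, v1) := Sym2.eq_swap
    rw [hT1, triple_swap12, sw]
  obtain ⟨w, hwh, hwu, hwv1, hT2⟩ := tri_ext htri2 hT1'' hhv1 huv1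
    (by rw [← hψp2]; exact Finset.mem_image_of_mem ψ hp2m2) (by rw [hT12, hψp2])
  have hwv0 : w ≠ v0 := by
    intro hEq
    subst hEq
    have hmem : s(h, w) ∈ (C.cline 0).image ψ ∩ (C.cline 2).image ψ := by
      refine Finset.mem_inter.mpr ⟨?_, ?_⟩
      · rw [hT0]; simp
      · rw [hT2]; simp
    rw [hT02] at hmem
    exact absurd hmem (Finset.notMem_empty _)
  have hψp3mem : ψ (C.p 3) ∈ ({s(h, u), s(h, w), s(u, w)} : Finset (Sym2 V)) :=
    hT2 ▸ Finset.mem_image_of_mem ψ hp3m2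
  have hψp3cases : ψ (C.p 3) = s(h, w) ∨ ψ (C.p 3) = s(u, w) := by
    refine mem3_resolve2 hψp3mem ?_
    rw [← hψp2]; exact hψne _ hp3J _ hp2J hp23.symm
  have hψp3 : ψ (C.p 3) = s(h, w) := by
    rcases hψp3cases with hgood | hbad
    · exact hgood
    · exfalso
      obtain ⟨t, ht3, ht0⟩ := triangle_share htri3 (Finset.mem_image_of_mem ψ hp3m3)
        (Finset.mem_image_of_mem ψ hp0m3)
      rw [hψp0, Sym2.mem_iff] at ht0
      rw [hbad, Sym2.mem_iff] at ht3
      rcases ht3 with rfl | rfl <;> rcases ht0 with rfl | rfl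
      · exact huh rfl
      · exact huv0' rfl
      · exact hwh rfl
      · exact hwv0 rfl
  have hψQ2 : ψ Q2 = s(u, w) := by
    refine mem3_resolve (hT2 ▸ Finset.mem_image_of_mem ψ hQ2m) ?_ ?_
    · rw [← hψp2]; exact hψne _ hQ2J _ hp2J hQ2p2
    · rw [← hψp3]; exact hψne _ hQ2J _ hp3J hQ2p3
  -- T3
  have hψp30 : ψ (C.p 3) ≠ ψ (C.p 0) := hψne _ hp3J _ hp0J (fun hh => hp03 hh.symm)
  obtain ⟨h', a, b, hh'a, hh'b, hab, he3, he0, hT3⟩ :=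
    triangle_pair htri3 (Finset.mem_image_of_mem ψ hp3m3) (Finset.mem_image_of_mem ψ hp0m3)
      hψp30
  have hwh' : w ≠ h := fun hh => hwh hh
  -- resolve h' = h, a = w, b = v0
  have hresolve : h' = h ∧ a = w ∧ b = v0 := by
    rw [hψp3] at he3
    rw [hψp0] at he0
    rw [Sym2.eq_iff] at he3 he0
    rcases he3 with ⟨rfl, rfl⟩ | ⟨hha, rfl⟩
    · rcases he0 with ⟨-, rfl⟩ | ⟨hhb, hv0⟩
      · exact ⟨rfl, rfl, rfl⟩
      · exact absurd hv0.symm hhv0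
    · rcases he0 with ⟨hhh, -⟩ | ⟨-, hv0⟩
      · exact absurd hhh.symm hwh
      · exact absurd hv0.symm hwv0
  have hT3' : (C.cline 3).image ψ = {s(h, w), s(h, v0), s(w, v0)} := by
    rw [hT3, hresolve.1, hresolve.2.1, hresolve.2.2]
  have hψQ3 : ψ Q3 = s(w, v0) := by
    refine mem3_resolve (hT3' ▸ Finset.mem_image_of_mem ψ hQ3m) ?_ ?_
    · rw [← hψp3]; exact hψne _ hQ3J _ hp3J hQ3p3
    · rw [← hψp0]; exact hψne _ hQ3J _ hp0J hQ3p0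
  exact ⟨{
    Q0 := Q0, Q1 := Q1, Q2 := Q2, Q3 := Q3
    hub := h, v0 := v0, v1 := v1, v2 := u, v3 := w
    dh0 := hhv0, dh1 := hhv1, dh2 := fun hh => huh hh.symm, dh3 := fun hh => hwh hh.symm
    d01 := hv01, d02 := fun hh => huv0' hh.symm, d03 := fun hh => hwv0 hh.symm
    d12 := fun hh => huv1 hh.symm, d13 := fun hh => hwv1 hh.symm
    d23 := fun hh => hwu hh.symm
    cl0 := hL0, cl1 := hL1, cl2 := hL2
    cl3 := hL3
    psip0 := hψp0, psip1 := hψp1, psip2 := hψp2, psip3 := hψp3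
    psiq0 := hψQ0, psiq1 := hψQ1, psiq2 := hψQ2, psiq3 := hψQ3 }⟩

structure Wheel3Data {α V : Type} (S : PLS α) (ψ : α → Sym2 V) (C : PLSCycle α) where
  Q0 : α
  Q1 : α
  Q2 : α
  hub : V
  v0 : V
  v1 : V
  v2 : V
  dh0 : hub ≠ v0
  dh1 : hub ≠ v1
  dh2 : hub ≠ v2
  d01 : v0 ≠ v1
  d02 : v0 ≠ v2
  d12 : v1 ≠ v2
  cl0 : C.cline 0 = {C.p 0, C.p 1, Q0}
  cl1 : C.cline 1 = {C.p 1, C.p 2, Q1}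
  cl2 : C.cline 2 = {C.p 2, C.p 0, Q2}
  psip0 : ψ (C.p 0) = s(hub, v0)
  psip1 : ψ (C.p 1) = s(hub, v1)
  psip2 : ψ (C.p 2) = s(hub, v2)
  psiq0 : ψ Q0 = s(v0, v1)
  psiq1 : ψ Q1 = s(v1, v2)
  psiq2 : ψ Q2 = s(v2, v0)

set_option maxHeartbeats 1000000 in
lemma wheel3 {α V : Type} (S : PLS α) {G : SimpleGraph V} {ψ : α → Sym2 V}
    (hinj : Set.InjOn ψ (S.J : Set α))
    (htri : ∀ ℓ ∈ S.Λ, IsTriangle G (ℓ.image ψ))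
    (C : PLSCycle α) (hC : C.In S.Λ) (hn : C.n = 3) :
    Nonempty (Wheel3Data S ψ C) := by
  have hcl0 : C.cline 0 = C.line 0 := if_pos (by omega)
  have hcl1 : C.cline 1 = C.line 1 := if_pos (by omega)
  have hcl2 : C.cline 2 = C.closing := if_neg (by omega)
  have hΛ0 : C.cline 0 ∈ S.Λ := cline_mem_lambda hC (by omega)
  have hΛ1 : C.cline 1 ∈ S.Λ := cline_mem_lambda hC (by omega)
  have hΛ2 : C.cline 2 ∈ S.Λ := cline_mem_lambda hC (by omega)
  have hJ0 : C.cline 0 ⊆ S.J := S.line_sub _ hΛ0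
  have hJ1 : C.cline 1 ⊆ S.J := S.line_sub _ hΛ1
  have hJ2 : C.cline 2 ⊆ S.J := S.line_sub _ hΛ2
  have hp0m0 : C.p 0 ∈ C.cline 0 := by rw [hcl0]; exact C.p_mem_left 0 (by omega)
  have hp1m0 : C.p 1 ∈ C.cline 0 := by rw [hcl0]; exact C.p_mem_right 0 (by omega)
  have hp1m1 : C.p 1 ∈ C.cline 1 := by rw [hcl1]; exact C.p_mem_left 1 (by omega)
  have hp2m1 : C.p 2 ∈ C.cline 1 := by rw [hcl1]; exact C.p_mem_right 1 (by omega)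
  have hp2m2 : C.p 2 ∈ C.cline 2 := by
    rw [hcl2]
    have := C.closing_last
    rwa [hn] at this
  have hp0m2 : C.p 0 ∈ C.cline 2 := by rw [hcl2]; exact C.closing_first
  have hne01 : C.cline 0 ≠ C.cline 1 := by
    rw [hcl0, hcl1]; exact C.lines_ne 0 1 (by omega) (by omega)
  obtain ⟨qf, hqfc, hqfn⟩ := C.closing_new
  have hne3 : ∀ i, i + 1 < C.n → C.line i ≠ C.closing := by
    intro i hi hEq
    exact hqfn i hi (hEq ▸ hqfc)
  have hne02 : C.cline 0 ≠ C.cline 2 := by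
    rw [hcl0, hcl2]; exact hne3 0 (by omega)
  have hne12 : C.cline 1 ≠ C.cline 2 := by
    rw [hcl1, hcl2]; exact hne3 1 (by omega)
  have hp01 : C.p 0 ≠ C.p 1 := C.p_ne 0 (by omega)
  have hp12 : C.p 1 ≠ C.p 2 := C.p_ne 1 (by omega)
  have hint01 : C.cline 0 ∩ C.cline 1 = {C.p 1} := inter_sing S hΛ0 hΛ1 hne01 hp1m0 hp1m1
  have hp02 : C.p 0 ≠ C.p 2 := by
    intro hEq
    have : C.p 0 ∈ C.cline 0 ∩ C.cline 1 :=
      Finset.mem_inter.mpr ⟨hp0m0, hEq ▸ hp2m1⟩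
    rw [hint01, Finset.mem_singleton] at this
    exact hp01 this
  have hint12 : C.cline 1 ∩ C.cline 2 = {C.p 2} := inter_sing S hΛ1 hΛ2 hne12 hp2m1 hp2m2
  have hint20 : C.cline 2 ∩ C.cline 0 = {C.p 0} := inter_sing S hΛ2 hΛ0 hne02.symm hp0m2 hp0m0
  have hcard0 : (C.cline 0).card = 3 := S.line_card _ hΛ0
  have hcard1 : (C.cline 1).card = 3 := S.line_card _ hΛ1
  have hcard2 : (C.cline 2).card = 3 := S.line_card _ hΛ2
  obtain ⟨Q0, hQ0m, hQ0p0, hQ0p1, hL0⟩ := third_point hcard0 hp0m0 hp1m0 hp01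
  obtain ⟨Q1, hQ1m, hQ1p1, hQ1p2, hL1⟩ := third_point hcard1 hp1m1 hp2m1 hp12
  obtain ⟨Q2, hQ2m, hQ2p2, hQ2p0, hL2⟩ := third_point hcard2 hp2m2 hp0m2 hp02.symm
  have hp0J : C.p 0 ∈ S.J := hJ0 hp0m0
  have hp1J : C.p 1 ∈ S.J := hJ0 hp1m0
  have hp2J : C.p 2 ∈ S.J := hJ1 hp2m1
  have hQ0J : Q0 ∈ S.J := hJ0 hQ0m
  have hQ1J : Q1 ∈ S.J := hJ1 hQ1m
  have hQ2J : Q2 ∈ S.J := hJ2 hQ2m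
  have hψne : ∀ x ∈ S.J, ∀ y ∈ S.J, x ≠ y → ψ x ≠ ψ y := by
    intro x hx y hy hxy hEq
    exact hxy (hinj hx hy hEq)
  have htri0 := htri _ hΛ0
  have htri1 := htri _ hΛ1
  have htri2 := htri _ hΛ2
  have hT01 : (C.cline 0).image ψ ∩ (C.cline 1).image ψ = {ψ (C.p 1)} := by
    rw [img_inter hinj hJ0 hJ1, hint01, Finset.image_singleton]
  obtain ⟨h, v0, v1, hhv0, hhv1, hv01, hψp0, hψp1, hT0⟩ :=
    triangle_pair htri0 (Finset.mem_image_of_mem ψ hp0m0) (Finset.mem_image_of_mem ψ hp1m0)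
      (hψne _ hp0J _ hp1J hp01)
  have hψQ0 : ψ Q0 = s(v0, v1) := by
    refine mem3_resolve (hT0 ▸ Finset.mem_image_of_mem ψ hQ0m) ?_ ?_
    · rw [← hψp0]; exact hψne _ hQ0J _ hp0J hQ0p0
    · rw [← hψp1]; exact hψne _ hQ0J _ hp1J hQ0p1
  have hT0' : (C.cline 0).image ψ = {s(h, v1), s(h, v0), s(v1, v0)} := by
    have sw : s(v0, v1) = s(v1, v0) := Sym2.eq_swap
    rw [hT0, triple_swap12, sw]
  obtain ⟨u, huh, huv1, huv0, hT1⟩ := tri_ext htri1 hT0' hhv0 (fun hh => hv01 hh.symm)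
    (by rw [← hψp1]; exact Finset.mem_image_of_mem ψ hp1m1) (by rw [hT01, hψp1])
  have hψp2mem : ψ (C.p 2) ∈ ({s(h, v1), s(h, u), s(v1, u)} : Finset (Sym2 V)) :=
    hT1 ▸ Finset.mem_image_of_mem ψ hp2m1
  have hψp2cases : ψ (C.p 2) = s(h, u) ∨ ψ (C.p 2) = s(v1, u) := by
    refine mem3_resolve2 hψp2mem ?_
    rw [← hψp1]; exact hψne _ hp2J _ hp1J hp12.symm
  have hψp2 : ψ (C.p 2) = s(h, u) := by
    rcases hψp2cases with hgood | hbad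
    · exact hgood
    · exfalso
      obtain ⟨t, ht2, ht0⟩ := triangle_share htri2 (Finset.mem_image_of_mem ψ hp2m2)
        (Finset.mem_image_of_mem ψ hp0m2)
      rw [hψp0, Sym2.mem_iff] at ht0
      rw [hbad, Sym2.mem_iff] at ht2
      have huv0' : u = v0 := by
        rcases ht2 with rfl | rfl <;> rcases ht0 with hh | hh
        · exact absurd hh hhv1.symm
        · exact absurd hh (fun hhh => hv01 hhh.symm)
        · exact absurd hh (fun hhh => huh hh)
        · exact hh
      subst huv0'
      have hbadmem : ψ (C.p 2) ∈ (C.cline 0).image ψ ∩ (C.cline 1).image ψ := by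
        refine Finset.mem_inter.mpr ⟨?_, Finset.mem_image_of_mem ψ hp2m1⟩
        rw [hT0']
        simp [hbad]
      rw [hT01, Finset.mem_singleton] at hbadmem
      exact hp12 (hinj hp2J hp1J hbadmem).symm
  have huv0' : u ≠ v0 := by
    intro hEq
    have : ψ (C.p 0) = ψ (C.p 2) := by rw [hψp0, hψp2, hEq]
    exact hp02 (hinj hp0J hp2J this)
  have hψQ1 : ψ Q1 = s(v1, u) := by
    refine mem3_resolve (hT1 ▸ Finset.mem_image_of_mem ψ hQ1m) ?_ ?_
    · rw [← hψp1]; exact hψne _ hQ1J _ hp1J hQ1p1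
    · rw [← hψp2]; exact hψne _ hQ1J _ hp2J hQ1p2
  -- T2
  have hψp20 : ψ (C.p 2) ≠ ψ (C.p 0) := hψne _ hp2J _ hp0J (fun hh => hp02 hh.symm)
  obtain ⟨h', a, b, hh'a, hh'b, hab, he2, he0, hT2⟩ :=
    triangle_pair htri2 (Finset.mem_image_of_mem ψ hp2m2) (Finset.mem_image_of_mem ψ hp0m2)
      hψp20
  have hresolve : h' = h ∧ a = u ∧ b = v0 := by
    rw [hψp2] at he2
    rw [hψp0] at he0
    rw [Sym2.eq_iff] at he2 he0
    rcases he2 with ⟨rfl, rfl⟩ | ⟨hha, rfl⟩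
    · rcases he0 with ⟨-, rfl⟩ | ⟨hhb, hv0⟩
      · exact ⟨rfl, rfl, rfl⟩
      · exact absurd hv0.symm hhv0
    · rcases he0 with ⟨hhh, -⟩ | ⟨-, hv0⟩
      · exact absurd hhh.symm huh
      · exact absurd hv0.symm huv0'
  have hT2' : (C.cline 2).image ψ = {s(h, u), s(h, v0), s(u, v0)} := by
    rw [hT2, hresolve.1, hresolve.2.1, hresolve.2.2]
  have hψQ2 : ψ Q2 = s(u, v0) := by
    refine mem3_resolve (hT2' ▸ Finset.mem_image_of_mem ψ hQ2m) ?_ ?_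
    · rw [← hψp2]; exact hψne _ hQ2J _ hp2J hQ2p2
    · rw [← hψp0]; exact hψne _ hQ2J _ hp0J hQ2p0
  exact ⟨{
    Q0 := Q0, Q1 := Q1, Q2 := Q2
    hub := h, v0 := v0, v1 := v1, v2 := u
    dh0 := hhv0, dh1 := hhv1, dh2 := fun hh => huh hh.symm
    d01 := hv01, d02 := fun hh => huv0' hh.symm, d12 := fun hh => huv1 hh.symm
    cl0 := hL0, cl1 := hL1, cl2 := hL2
    psip0 := hψp0, psip1 := hψp1, psip2 := hψp2
    psiq0 := hψQ0, psiq1 := hψQ1, psiq2 := hψQ2 }⟩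

lemma ne_of_psi {α V : Type} {ψ : α → Sym2 V} {x y : α} (h : ψ x ≠ ψ y) : x ≠ y :=
  fun e => h (by rw [e])

lemma notmem_of_psi {α V : Type} {ψ : α → Sym2 V} {x : α} {ℓ : Finset α}
    (h : ψ x ∉ ℓ.image ψ) : x ∉ ℓ :=
  fun hm => h (Finset.mem_image_of_mem ψ hm)

lemma sym2_ne_left {V : Type} {a b c d : V} (h1 : a ≠ c) (h2 : a ≠ d) :
    s(a, b) ≠ s(c, d) := by
  rw [Ne, Sym2.eq_iff]
  rintro (⟨h, -⟩ | ⟨h, -⟩)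
  · exact h1 h
  · exact h2 h

lemma sym2_ne_right {V : Type} {a b c d : V} (h1 : b ≠ c) (h2 : b ≠ d) :
    s(a, b) ≠ s(c, d) := by
  rw [Ne, Sym2.eq_iff]
  rintro (⟨-, h⟩ | ⟨-, h⟩)
  · exact h2 h
  · exact h1 h

lemma notmem3 {X : Type} [DecidableEq X] {g e1 e2 e3 : X}
    (h1 : g ≠ e1) (h2 : g ≠ e2) (h3 : g ≠ e3) : g ∉ ({e1, e2, e3} : Finset X) := by
  simp only [Finset.mem_insert, Finset.mem_singleton]
  rintro (rfl | rfl | rfl)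
  · exact h1 rfl
  · exact h2 rfl
  · exact h3 rfl

lemma mem_img_of {α V : Type} {ψ : α → Sym2 V} {q : α} {B : Finset α} {e : Sym2 V}
    (hq : q ∈ B) (he : ψ q = e) : e ∈ B.image ψ :=
  he ▸ Finset.mem_image_of_mem ψ hq

lemma link_kill {α V : Type} (S : PLS α) {G : SimpleGraph V} {ψ : α → Sym2 V}
    (hinj : Set.InjOn ψ (S.J : Set α))
    (htri : ∀ ℓ ∈ S.Λ, IsTriangle G (ℓ.image ψ))
    (P : PLSPath α) (hPΛ : P.In S.Λ)
    (C : PLSCycle α) (hC : C.In S.Λ)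
    (hint : P.ptSet ∩ C.cptSet = {P.first, P.last})
    (c1 c2 ya yb : V)
    (hψf : ψ P.first = s(ya, yb)) (hψl : ψ P.last = s(c1, c2))
    (d1 : ya ≠ c1) (d2 : ya ≠ c2) (d3 : yb ≠ c1) (d4 : yb ≠ c2)
    (e1 : s(ya, c1) ∈ C.cptSet.image ψ ∨ s(yb, c1) ∈ C.cptSet.image ψ)
    (e2 : s(ya, c2) ∈ C.cptSet.image ψ ∨ s(yb, c2) ∈ C.cptSet.image ψ)
    (hn : P.n = 2 ∨ P.n = 3) : False := by
  refine link_contradiction S hinj htri P hPΛ C.cptSet (cpt_sub_J hC) hint ?_ ?_ hn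
  · intro v hv1 hv2
    rw [hψf, Sym2.mem_iff] at hv1
    rw [hψl, Sym2.mem_iff] at hv2
    rcases hv1 with rfl | rfl <;> rcases hv2 with hh | hh
    · exact d1 hh
    · exact d2 hh
    · exact d3 hh
    · exact d4 hh
  · intro c hc a b hab
    rw [hψl, Sym2.mem_iff] at hc
    rw [hψf, Sym2.eq_iff] at hab
    rcases hab with ⟨rfl, rfl⟩ | ⟨rfl, rfl⟩ <;> rcases hc with rfl | rfl
    · exact e1
    · exact e2
    · exact e1.symm
    · exact e2.symm

theorem statement_10 {α V : Type} [Fintype V] (S : PLS α) (hsg : S.SmallGirth)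
    (G : SimpleGraph V) (ψ : α → Sym2 V) (h : LinePresRankModels S G ψ) :
    S.IsBMPL := by
  have htri : ∀ ℓ ∈ S.Λ, IsTriangle G (ℓ.image ψ) := h.1.2
  have hinj : Set.InjOn ψ (S.J : Set α) := h.1.1.2.1
  intro C hC P hPΛ
  constructor
  · -- type 1 links
    intro hT1
    obtain ⟨hfm, hlastj, hint⟩ := hT1
    obtain ⟨j, hj, hlast⟩ := hlastj
    obtain ⟨i0, hi0, hmid⟩ := hfm
    rcases hsg C hC with hn3 | hn4
    · obtain ⟨W⟩ := wheel3 S hinj htri C hC hn3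
      have img0 : (C.cline 0).image ψ = {s(W.hub, W.v0), s(W.hub, W.v1), s(W.v0, W.v1)} := by
        rw [W.cl0, Finset.image_insert, Finset.image_insert, Finset.image_singleton,
          W.psip0, W.psip1, W.psiq0]
      have img1 : (C.cline 1).image ψ = {s(W.hub, W.v1), s(W.hub, W.v2), s(W.v1, W.v2)} := by
        rw [W.cl1, Finset.image_insert, Finset.image_insert, Finset.image_singleton,
          W.psip1, W.psip2, W.psiq1]
      have img2 : (C.cline 2).image ψ = {s(W.hub, W.v2), s(W.hub, W.v0), s(W.v2, W.v0)} := by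
        rw [W.cl2, Finset.image_insert, Finset.image_insert, Finset.image_singleton,
          W.psip2, W.psip0, W.psiq2]
      rw [hn3] at hi0 hj
      interval_cases i0 <;> interval_cases j
      · exact ⟨0, by omega, hmid.1, by rw [hlast, W.cl0]; simp⟩
      · exact ⟨0, by omega, hmid.1, by rw [hlast, W.cl0]; simp⟩
      ·
        have hfq : P.first = W.Q0 := by
          obtain ⟨hm1, hm2, hm3⟩ := hmid
          rw [W.cl0] at hm1
          rw [show (0 + 1) % C.n = 1 from by rw [hn3]] at hm3
          exact mem3_resolve hm1 hm2 hm3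
        have hPn := comp1 S hsg P hPΛ C hint
          (C.cline 2) (C.cline 0)
          (cline_mem_lambda (i := 2) hC (by omega)) (cline_mem_lambda (i := 0) hC (by omega))
          (cline_sub_cpt (i := 2) (by omega))
          (C.p 0) (C.p 1)
          (by rw [hlast, W.cl2]; simp)
          (by rw [W.cl2]; simp)
          (by rw [hlast]; exact (ne_of_psi (ψ := ψ) (by rw [W.psip2, W.psip0]; exact (sym2_ne_right W.dh2.symm W.d02.symm))))
          (by rw [W.cl0]; simp)
          (by rw [hfq, W.cl0]; simp)
          (by rw [hfq]; exact (notmem_of_psi (ψ := ψ) (by rw [img2, W.psiq0]; exact notmem3 (sym2_ne_left W.dh0.symm W.d02) (sym2_ne_right W.dh1.symm W.d01.symm) (sym2_ne_right W.d12 W.d01.symm))))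
          (cline_sub_cpt (i := 0) (by omega) (by rw [W.cl0]; simp))
          (by rw [hfq]; exact (ne_of_psi (ψ := ψ) (by rw [W.psip0, W.psiq0]; exact (sym2_ne_left W.dh0 W.dh1))))
          (by rw [hlast]; exact (ne_of_psi (ψ := ψ) (by rw [W.psip0, W.psip2]; exact (sym2_ne_right W.dh0.symm W.d02))))
          (by rw [W.cl0]; simp)
          (notmem_of_psi (ψ := ψ) (by rw [img2, W.psip1]; exact notmem3 (sym2_ne_right W.dh1.symm W.d12) (sym2_ne_right W.dh1.symm W.d01.symm) (sym2_ne_left W.dh2 W.dh0)))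
          (cline_sub_cpt (i := 0) (by omega) (by rw [W.cl0]; simp))
          (by rw [hfq]; exact (ne_of_psi (ψ := ψ) (by rw [W.psip1, W.psiq0]; exact (sym2_ne_left W.dh0 W.dh1))))
          (by rw [hlast]; exact (ne_of_psi (ψ := ψ) (by rw [W.psip1, W.psip2]; exact (sym2_ne_right W.dh1.symm W.d12))))
        exact (link_kill S hinj htri P hPΛ C hC hint W.hub W.v2 W.v0 W.v1
          (by rw [hfq]; exact W.psiq0) (by rw [hlast]; exact W.psip2)
          W.dh0.symm W.d02 W.dh1.symm W.d12
          (Or.inl (mem_img_of (cline_sub_cpt (i := 0) (by omega) (by rw [W.cl0]; simp)) (W.psip0.trans Sym2.eq_swap)))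
          (Or.inl (mem_img_of (cline_sub_cpt (i := 2) (by omega) (by rw [W.cl2]; simp)) (W.psiq2.trans Sym2.eq_swap)))
          (by have := P.two_le; omega)).elim
      ·
        have hfq : P.first = W.Q1 := by
          obtain ⟨hm1, hm2, hm3⟩ := hmid
          rw [W.cl1] at hm1
          rw [show (1 + 1) % C.n = 2 from by rw [hn3]] at hm3
          exact mem3_resolve hm1 hm2 hm3
        have hPn := comp1 S hsg P hPΛ C hint
          (C.cline 0) (C.cline 1)
          (cline_mem_lambda (i := 0) hC (by omega)) (cline_mem_lambda (i := 1) hC (by omega))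
          (cline_sub_cpt (i := 0) (by omega))
          (C.p 1) (C.p 2)
          (by rw [hlast, W.cl0]; simp)
          (by rw [W.cl0]; simp)
          (by rw [hlast]; exact (ne_of_psi (ψ := ψ) (by rw [W.psip0, W.psip1]; exact (sym2_ne_right W.dh0.symm W.d01))))
          (by rw [W.cl1]; simp)
          (by rw [hfq, W.cl1]; simp)
          (by rw [hfq]; exact (notmem_of_psi (ψ := ψ) (by rw [img0, W.psiq1]; exact notmem3 (sym2_ne_left W.dh1.symm W.d01.symm) (sym2_ne_right W.dh2.symm W.d12.symm) (sym2_ne_right W.d02.symm W.d12.symm))))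
          (cline_sub_cpt (i := 1) (by omega) (by rw [W.cl1]; simp))
          (by rw [hfq]; exact (ne_of_psi (ψ := ψ) (by rw [W.psip1, W.psiq1]; exact (sym2_ne_left W.dh1 W.dh2))))
          (by rw [hlast]; exact (ne_of_psi (ψ := ψ) (by rw [W.psip1, W.psip0]; exact (sym2_ne_right W.dh1.symm W.d01.symm))))
          (by rw [W.cl1]; simp)
          (notmem_of_psi (ψ := ψ) (by rw [img0, W.psip2]; exact notmem3 (sym2_ne_right W.dh2.symm W.d02.symm) (sym2_ne_right W.dh2.symm W.d12.symm) (sym2_ne_left W.dh0 W.dh1)))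
          (cline_sub_cpt (i := 1) (by omega) (by rw [W.cl1]; simp))
          (by rw [hfq]; exact (ne_of_psi (ψ := ψ) (by rw [W.psip2, W.psiq1]; exact (sym2_ne_left W.dh1 W.dh2))))
          (by rw [hlast]; exact (ne_of_psi (ψ := ψ) (by rw [W.psip2, W.psip0]; exact (sym2_ne_right W.dh2.symm W.d02.symm))))
        exact (link_kill S hinj htri P hPΛ C hC hint W.hub W.v0 W.v1 W.v2
          (by rw [hfq]; exact W.psiq1) (by rw [hlast]; exact W.psip0)
          W.dh1.symm W.d01.symm W.dh2.symm W.d02.symm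
          (Or.inl (mem_img_of (cline_sub_cpt (i := 1) (by omega) (by rw [W.cl1]; simp)) (W.psip1.trans Sym2.eq_swap)))
          (Or.inl (mem_img_of (cline_sub_cpt (i := 0) (by omega) (by rw [W.cl0]; simp)) (W.psiq0.trans Sym2.eq_swap)))
          (by have := P.two_le; omega)).elim
      · exact ⟨1, by omega, hmid.1, by rw [hlast, W.cl1]; simp⟩
      · exact ⟨1, by omega, hmid.1, by rw [hlast, W.cl1]; simp⟩
      · exact ⟨2, by omega, hmid.1, by rw [hlast, W.cl2]; simp⟩
      ·
        have hfq : P.first = W.Q2 := by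
          obtain ⟨hm1, hm2, hm3⟩ := hmid
          rw [W.cl2] at hm1
          rw [show (2 + 1) % C.n = 0 from by rw [hn3]] at hm3
          exact mem3_resolve hm1 hm2 hm3
        have hPn := comp1 S hsg P hPΛ C hint
          (C.cline 1) (C.cline 2)
          (cline_mem_lambda (i := 1) hC (by omega)) (cline_mem_lambda (i := 2) hC (by omega))
          (cline_sub_cpt (i := 1) (by omega))
          (C.p 2) (C.p 0)
          (by rw [hlast, W.cl1]; simp)
          (by rw [W.cl1]; simp)
          (by rw [hlast]; exact (ne_of_psi (ψ := ψ) (by rw [W.psip1, W.psip2]; exact (sym2_ne_right W.dh1.symm W.d12))))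
          (by rw [W.cl2]; simp)
          (by rw [hfq, W.cl2]; simp)
          (by rw [hfq]; exact (notmem_of_psi (ψ := ψ) (by rw [img1, W.psiq2]; exact notmem3 (sym2_ne_left W.dh2.symm W.d12.symm) (sym2_ne_right W.dh0.symm W.d02) (sym2_ne_right W.d01 W.d02))))
          (cline_sub_cpt (i := 2) (by omega) (by rw [W.cl2]; simp))
          (by rw [hfq]; exact (ne_of_psi (ψ := ψ) (by rw [W.psip2, W.psiq2]; exact (sym2_ne_left W.dh2 W.dh0))))
          (by rw [hlast]; exact (ne_of_psi (ψ := ψ) (by rw [W.psip2, W.psip1]; exact (sym2_ne_right W.dh2.symm W.d12.symm))))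
          (by rw [W.cl2]; simp)
          (notmem_of_psi (ψ := ψ) (by rw [img1, W.psip0]; exact notmem3 (sym2_ne_right W.dh0.symm W.d01) (sym2_ne_right W.dh0.symm W.d02) (sym2_ne_left W.dh1 W.dh2)))
          (cline_sub_cpt (i := 2) (by omega) (by rw [W.cl2]; simp))
          (by rw [hfq]; exact (ne_of_psi (ψ := ψ) (by rw [W.psip0, W.psiq2]; exact (sym2_ne_left W.dh2 W.dh0))))
          (by rw [hlast]; exact (ne_of_psi (ψ := ψ) (by rw [W.psip0, W.psip1]; exact (sym2_ne_right W.dh0.symm W.d01))))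
        exact (link_kill S hinj htri P hPΛ C hC hint W.hub W.v1 W.v2 W.v0
          (by rw [hfq]; exact W.psiq2) (by rw [hlast]; exact W.psip1)
          W.dh2.symm W.d12.symm W.dh0.symm W.d01
          (Or.inl (mem_img_of (cline_sub_cpt (i := 2) (by omega) (by rw [W.cl2]; simp)) (W.psip2.trans Sym2.eq_swap)))
          (Or.inl (mem_img_of (cline_sub_cpt (i := 1) (by omega) (by rw [W.cl1]; simp)) (W.psiq1.trans Sym2.eq_swap)))
          (by have := P.two_le; omega)).elim
      · exact ⟨2, by omega, hmid.1, by rw [hlast, W.cl2]; simp⟩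
    · obtain ⟨W⟩ := wheel4 S hinj htri C hC hn4
      have img0 : (C.cline 0).image ψ = {s(W.hub, W.v0), s(W.hub, W.v1), s(W.v0, W.v1)} := by
        rw [W.cl0, Finset.image_insert, Finset.image_insert, Finset.image_singleton,
          W.psip0, W.psip1, W.psiq0]
      have img1 : (C.cline 1).image ψ = {s(W.hub, W.v1), s(W.hub, W.v2), s(W.v1, W.v2)} := by
        rw [W.cl1, Finset.image_insert, Finset.image_insert, Finset.image_singleton,
          W.psip1, W.psip2, W.psiq1]
      have img2 : (C.cline 2).image ψ = {s(W.hub, W.v2), s(W.hub, W.v3), s(W.v2, W.v3)} := by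
        rw [W.cl2, Finset.image_insert, Finset.image_insert, Finset.image_singleton,
          W.psip2, W.psip3, W.psiq2]
      have img3 : (C.cline 3).image ψ = {s(W.hub, W.v3), s(W.hub, W.v0), s(W.v3, W.v0)} := by
        rw [W.cl3, Finset.image_insert, Finset.image_insert, Finset.image_singleton,
          W.psip3, W.psip0, W.psiq3]
      rw [hn4] at hi0 hj
      interval_cases i0 <;> interval_cases j
      · exact ⟨0, by omega, hmid.1, by rw [hlast, W.cl0]; simp⟩
      · exact ⟨0, by omega, hmid.1, by rw [hlast, W.cl0]; simp⟩
      ·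
        have hfq : P.first = W.Q0 := by
          obtain ⟨hm1, hm2, hm3⟩ := hmid
          rw [W.cl0] at hm1
          rw [show (0 + 1) % C.n = 1 from by rw [hn4]] at hm3
          exact mem3_resolve hm1 hm2 hm3
        have hPn := comp1 S hsg P hPΛ C hint
          (C.cline 1) (C.cline 0)
          (cline_mem_lambda (i := 1) hC (by omega)) (cline_mem_lambda (i := 0) hC (by omega))
          (cline_sub_cpt (i := 1) (by omega))
          (C.p 1) (C.p 0)
          (by rw [hlast, W.cl1]; simp)
          (by rw [W.cl1]; simp)
          (by rw [hlast]; exact (ne_of_psi (ψ := ψ) (by rw [W.psip2, W.psip1]; exact (sym2_ne_right W.dh2.symm W.d12.symm))))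
          (by rw [W.cl0]; simp)
          (by rw [hfq, W.cl0]; simp)
          (by rw [hfq]; exact (notmem_of_psi (ψ := ψ) (by rw [img1, W.psiq0]; exact notmem3 (sym2_ne_left W.dh0.symm W.d01) (sym2_ne_left W.dh0.symm W.d02) (sym2_ne_left W.d01 W.d02))))
          (cline_sub_cpt (i := 0) (by omega) (by rw [W.cl0]; simp))
          (by rw [hfq]; exact (ne_of_psi (ψ := ψ) (by rw [W.psip1, W.psiq0]; exact (sym2_ne_left W.dh0 W.dh1))))
          (by rw [hlast]; exact (ne_of_psi (ψ := ψ) (by rw [W.psip1, W.psip2]; exact (sym2_ne_right W.dh1.symm W.d12))))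
          (by rw [W.cl0]; simp)
          (notmem_of_psi (ψ := ψ) (by rw [img1, W.psip0]; exact notmem3 (sym2_ne_right W.dh0.symm W.d01) (sym2_ne_right W.dh0.symm W.d02) (sym2_ne_left W.dh1 W.dh2)))
          (cline_sub_cpt (i := 0) (by omega) (by rw [W.cl0]; simp))
          (by rw [hfq]; exact (ne_of_psi (ψ := ψ) (by rw [W.psip0, W.psiq0]; exact (sym2_ne_left W.dh0 W.dh1))))
          (by rw [hlast]; exact (ne_of_psi (ψ := ψ) (by rw [W.psip0, W.psip2]; exact (sym2_ne_right W.dh0.symm W.d02))))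
        exact (link_kill S hinj htri P hPΛ C hC hint W.hub W.v2 W.v0 W.v1
          (by rw [hfq]; exact W.psiq0) (by rw [hlast]; exact W.psip2)
          W.dh0.symm W.d02 W.dh1.symm W.d12
          (Or.inl (mem_img_of (cline_sub_cpt (i := 0) (by omega) (by rw [W.cl0]; simp)) (W.psip0.trans Sym2.eq_swap)))
          (Or.inr (mem_img_of (cline_sub_cpt (i := 1) (by omega) (by rw [W.cl1]; simp)) W.psiq1))
          (by have := P.two_le; omega)).elim
      ·
        have hfq : P.first = W.Q0 := by
          obtain ⟨hm1, hm2, hm3⟩ := hmid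
          rw [W.cl0] at hm1
          rw [show (0 + 1) % C.n = 1 from by rw [hn4]] at hm3
          exact mem3_resolve hm1 hm2 hm3
        have hPn := comp1 S hsg P hPΛ C hint
          (C.cline 3) (C.cline 0)
          (cline_mem_lambda (i := 3) hC (by omega)) (cline_mem_lambda (i := 0) hC (by omega))
          (cline_sub_cpt (i := 3) (by omega))
          (C.p 0) (C.p 1)
          (by rw [hlast, W.cl3]; simp)
          (by rw [W.cl3]; simp)
          (by rw [hlast]; exact (ne_of_psi (ψ := ψ) (by rw [W.psip3, W.psip0]; exact (sym2_ne_right W.dh3.symm W.d03.symm))))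
          (by rw [W.cl0]; simp)
          (by rw [hfq, W.cl0]; simp)
          (by rw [hfq]; exact (notmem_of_psi (ψ := ψ) (by rw [img3, W.psiq0]; exact notmem3 (sym2_ne_left W.dh0.symm W.d03) (sym2_ne_right W.dh1.symm W.d01.symm) (sym2_ne_right W.d13 W.d01.symm))))
          (cline_sub_cpt (i := 0) (by omega) (by rw [W.cl0]; simp))
          (by rw [hfq]; exact (ne_of_psi (ψ := ψ) (by rw [W.psip0, W.psiq0]; exact (sym2_ne_left W.dh0 W.dh1))))
          (by rw [hlast]; exact (ne_of_psi (ψ := ψ) (by rw [W.psip0, W.psip3]; exact (sym2_ne_right W.dh0.symm W.d03))))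
          (by rw [W.cl0]; simp)
          (notmem_of_psi (ψ := ψ) (by rw [img3, W.psip1]; exact notmem3 (sym2_ne_right W.dh1.symm W.d13) (sym2_ne_right W.dh1.symm W.d01.symm) (sym2_ne_left W.dh3 W.dh0)))
          (cline_sub_cpt (i := 0) (by omega) (by rw [W.cl0]; simp))
          (by rw [hfq]; exact (ne_of_psi (ψ := ψ) (by rw [W.psip1, W.psiq0]; exact (sym2_ne_left W.dh0 W.dh1))))
          (by rw [hlast]; exact (ne_of_psi (ψ := ψ) (by rw [W.psip1, W.psip3]; exact (sym2_ne_right W.dh1.symm W.d13))))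
        exact (link_kill S hinj htri P hPΛ C hC hint W.hub W.v3 W.v0 W.v1
          (by rw [hfq]; exact W.psiq0) (by rw [hlast]; exact W.psip3)
          W.dh0.symm W.d03 W.dh1.symm W.d13
          (Or.inl (mem_img_of (cline_sub_cpt (i := 0) (by omega) (by rw [W.cl0]; simp)) (W.psip0.trans Sym2.eq_swap)))
          (Or.inl (mem_img_of (cline_sub_cpt (i := 3) (by omega) (by rw [W.cl3]; simp)) (W.psiq3.trans Sym2.eq_swap)))
          (by have := P.two_le; omega)).elim
      ·
        have hfq : P.first = W.Q1 := by
          obtain ⟨hm1, hm2, hm3⟩ := hmid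
          rw [W.cl1] at hm1
          rw [show (1 + 1) % C.n = 2 from by rw [hn4]] at hm3
          exact mem3_resolve hm1 hm2 hm3
        have hPn := comp1 S hsg P hPΛ C hint
          (C.cline 0) (C.cline 1)
          (cline_mem_lambda (i := 0) hC (by omega)) (cline_mem_lambda (i := 1) hC (by omega))
          (cline_sub_cpt (i := 0) (by omega))
          (C.p 1) (C.p 2)
          (by rw [hlast, W.cl0]; simp)
          (by rw [W.cl0]; simp)
          (by rw [hlast]; exact (ne_of_psi (ψ := ψ) (by rw [W.psip0, W.psip1]; exact (sym2_ne_right W.dh0.symm W.d01))))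
          (by rw [W.cl1]; simp)
          (by rw [hfq, W.cl1]; simp)
          (by rw [hfq]; exact (notmem_of_psi (ψ := ψ) (by rw [img0, W.psiq1]; exact notmem3 (sym2_ne_left W.dh1.symm W.d01.symm) (sym2_ne_right W.dh2.symm W.d12.symm) (sym2_ne_right W.d02.symm W.d12.symm))))
          (cline_sub_cpt (i := 1) (by omega) (by rw [W.cl1]; simp))
          (by rw [hfq]; exact (ne_of_psi (ψ := ψ) (by rw [W.psip1, W.psiq1]; exact (sym2_ne_left W.dh1 W.dh2))))
          (by rw [hlast]; exact (ne_of_psi (ψ := ψ) (by rw [W.psip1, W.psip0]; exact (sym2_ne_right W.dh1.symm W.d01.symm))))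
          (by rw [W.cl1]; simp)
          (notmem_of_psi (ψ := ψ) (by rw [img0, W.psip2]; exact notmem3 (sym2_ne_right W.dh2.symm W.d02.symm) (sym2_ne_right W.dh2.symm W.d12.symm) (sym2_ne_left W.dh0 W.dh1)))
          (cline_sub_cpt (i := 1) (by omega) (by rw [W.cl1]; simp))
          (by rw [hfq]; exact (ne_of_psi (ψ := ψ) (by rw [W.psip2, W.psiq1]; exact (sym2_ne_left W.dh1 W.dh2))))
          (by rw [hlast]; exact (ne_of_psi (ψ := ψ) (by rw [W.psip2, W.psip0]; exact (sym2_ne_right W.dh2.symm W.d02.symm))))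
        exact (link_kill S hinj htri P hPΛ C hC hint W.hub W.v0 W.v1 W.v2
          (by rw [hfq]; exact W.psiq1) (by rw [hlast]; exact W.psip0)
          W.dh1.symm W.d01.symm W.dh2.symm W.d02.symm
          (Or.inl (mem_img_of (cline_sub_cpt (i := 1) (by omega) (by rw [W.cl1]; simp)) (W.psip1.trans Sym2.eq_swap)))
          (Or.inl (mem_img_of (cline_sub_cpt (i := 0) (by omega) (by rw [W.cl0]; simp)) (W.psiq0.trans Sym2.eq_swap)))
          (by have := P.two_le; omega)).elim
      · exact ⟨1, by omega, hmid.1, by rw [hlast, W.cl1]; simp⟩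
      · exact ⟨1, by omega, hmid.1, by rw [hlast, W.cl1]; simp⟩
      ·
        have hfq : P.first = W.Q1 := by
          obtain ⟨hm1, hm2, hm3⟩ := hmid
          rw [W.cl1] at hm1
          rw [show (1 + 1) % C.n = 2 from by rw [hn4]] at hm3
          exact mem3_resolve hm1 hm2 hm3
        have hPn := comp1 S hsg P hPΛ C hint
          (C.cline 2) (C.cline 1)
          (cline_mem_lambda (i := 2) hC (by omega)) (cline_mem_lambda (i := 1) hC (by omega))
          (cline_sub_cpt (i := 2) (by omega))
          (C.p 2) (C.p 1)
          (by rw [hlast, W.cl2]; simp)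
          (by rw [W.cl2]; simp)
          (by rw [hlast]; exact (ne_of_psi (ψ := ψ) (by rw [W.psip3, W.psip2]; exact (sym2_ne_right W.dh3.symm W.d23.symm))))
          (by rw [W.cl1]; simp)
          (by rw [hfq, W.cl1]; simp)
          (by rw [hfq]; exact (notmem_of_psi (ψ := ψ) (by rw [img2, W.psiq1]; exact notmem3 (sym2_ne_left W.dh1.symm W.d12) (sym2_ne_left W.dh1.symm W.d13) (sym2_ne_left W.d12 W.d13))))
          (cline_sub_cpt (i := 1) (by omega) (by rw [W.cl1]; simp))
          (by rw [hfq]; exact (ne_of_psi (ψ := ψ) (by rw [W.psip2, W.psiq1]; exact (sym2_ne_left W.dh1 W.dh2))))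
          (by rw [hlast]; exact (ne_of_psi (ψ := ψ) (by rw [W.psip2, W.psip3]; exact (sym2_ne_right W.dh2.symm W.d23))))
          (by rw [W.cl1]; simp)
          (notmem_of_psi (ψ := ψ) (by rw [img2, W.psip1]; exact notmem3 (sym2_ne_right W.dh1.symm W.d12) (sym2_ne_right W.dh1.symm W.d13) (sym2_ne_left W.dh2 W.dh3)))
          (cline_sub_cpt (i := 1) (by omega) (by rw [W.cl1]; simp))
          (by rw [hfq]; exact (ne_of_psi (ψ := ψ) (by rw [W.psip1, W.psiq1]; exact (sym2_ne_left W.dh1 W.dh2))))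
          (by rw [hlast]; exact (ne_of_psi (ψ := ψ) (by rw [W.psip1, W.psip3]; exact (sym2_ne_right W.dh1.symm W.d13))))
        exact (link_kill S hinj htri P hPΛ C hC hint W.hub W.v3 W.v1 W.v2
          (by rw [hfq]; exact W.psiq1) (by rw [hlast]; exact W.psip3)
          W.dh1.symm W.d13 W.dh2.symm W.d23
          (Or.inl (mem_img_of (cline_sub_cpt (i := 1) (by omega) (by rw [W.cl1]; simp)) (W.psip1.trans Sym2.eq_swap)))
          (Or.inr (mem_img_of (cline_sub_cpt (i := 2) (by omega) (by rw [W.cl2]; simp)) W.psiq2))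
          (by have := P.two_le; omega)).elim
      ·
        have hfq : P.first = W.Q2 := by
          obtain ⟨hm1, hm2, hm3⟩ := hmid
          rw [W.cl2] at hm1
          rw [show (2 + 1) % C.n = 3 from by rw [hn4]] at hm3
          exact mem3_resolve hm1 hm2 hm3
        have hPn := comp1 S hsg P hPΛ C hint
          (C.cline 3) (C.cline 2)
          (cline_mem_lambda (i := 3) hC (by omega)) (cline_mem_lambda (i := 2) hC (by omega))
          (cline_sub_cpt (i := 3) (by omega))
          (C.p 3) (C.p 2)
          (by rw [hlast, W.cl3]; simp)
          (by rw [W.cl3]; simp)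
          (by rw [hlast]; exact (ne_of_psi (ψ := ψ) (by rw [W.psip0, W.psip3]; exact (sym2_ne_right W.dh0.symm W.d03))))
          (by rw [W.cl2]; simp)
          (by rw [hfq, W.cl2]; simp)
          (by rw [hfq]; exact (notmem_of_psi (ψ := ψ) (by rw [img3, W.psiq2]; exact notmem3 (sym2_ne_left W.dh2.symm W.d23) (sym2_ne_left W.dh2.symm W.d02.symm) (sym2_ne_left W.d23 W.d02.symm))))
          (cline_sub_cpt (i := 2) (by omega) (by rw [W.cl2]; simp))
          (by rw [hfq]; exact (ne_of_psi (ψ := ψ) (by rw [W.psip3, W.psiq2]; exact (sym2_ne_left W.dh2 W.dh3))))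
          (by rw [hlast]; exact (ne_of_psi (ψ := ψ) (by rw [W.psip3, W.psip0]; exact (sym2_ne_right W.dh3.symm W.d03.symm))))
          (by rw [W.cl2]; simp)
          (notmem_of_psi (ψ := ψ) (by rw [img3, W.psip2]; exact notmem3 (sym2_ne_right W.dh2.symm W.d23) (sym2_ne_right W.dh2.symm W.d02.symm) (sym2_ne_left W.dh3 W.dh0)))
          (cline_sub_cpt (i := 2) (by omega) (by rw [W.cl2]; simp))
          (by rw [hfq]; exact (ne_of_psi (ψ := ψ) (by rw [W.psip2, W.psiq2]; exact (sym2_ne_left W.dh2 W.dh3))))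
          (by rw [hlast]; exact (ne_of_psi (ψ := ψ) (by rw [W.psip2, W.psip0]; exact (sym2_ne_right W.dh2.symm W.d02.symm))))
        exact (link_kill S hinj htri P hPΛ C hC hint W.hub W.v0 W.v2 W.v3
          (by rw [hfq]; exact W.psiq2) (by rw [hlast]; exact W.psip0)
          W.dh2.symm W.d02.symm W.dh3.symm W.d03.symm
          (Or.inl (mem_img_of (cline_sub_cpt (i := 2) (by omega) (by rw [W.cl2]; simp)) (W.psip2.trans Sym2.eq_swap)))
          (Or.inr (mem_img_of (cline_sub_cpt (i := 3) (by omega) (by rw [W.cl3]; simp)) W.psiq3))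
          (by have := P.two_le; omega)).elim
      ·
        have hfq : P.first = W.Q2 := by
          obtain ⟨hm1, hm2, hm3⟩ := hmid
          rw [W.cl2] at hm1
          rw [show (2 + 1) % C.n = 3 from by rw [hn4]] at hm3
          exact mem3_resolve hm1 hm2 hm3
        have hPn := comp1 S hsg P hPΛ C hint
          (C.cline 1) (C.cline 2)
          (cline_mem_lambda (i := 1) hC (by omega)) (cline_mem_lambda (i := 2) hC (by omega))
          (cline_sub_cpt (i := 1) (by omega))
          (C.p 2) (C.p 3)
          (by rw [hlast, W.cl1]; simp)
          (by rw [W.cl1]; simp)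
          (by rw [hlast]; exact (ne_of_psi (ψ := ψ) (by rw [W.psip1, W.psip2]; exact (sym2_ne_right W.dh1.symm W.d12))))
          (by rw [W.cl2]; simp)
          (by rw [hfq, W.cl2]; simp)
          (by rw [hfq]; exact (notmem_of_psi (ψ := ψ) (by rw [img1, W.psiq2]; exact notmem3 (sym2_ne_left W.dh2.symm W.d12.symm) (sym2_ne_right W.dh3.symm W.d23.symm) (sym2_ne_right W.d13.symm W.d23.symm))))
          (cline_sub_cpt (i := 2) (by omega) (by rw [W.cl2]; simp))
          (by rw [hfq]; exact (ne_of_psi (ψ := ψ) (by rw [W.psip2, W.psiq2]; exact (sym2_ne_left W.dh2 W.dh3))))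
          (by rw [hlast]; exact (ne_of_psi (ψ := ψ) (by rw [W.psip2, W.psip1]; exact (sym2_ne_right W.dh2.symm W.d12.symm))))
          (by rw [W.cl2]; simp)
          (notmem_of_psi (ψ := ψ) (by rw [img1, W.psip3]; exact notmem3 (sym2_ne_right W.dh3.symm W.d13.symm) (sym2_ne_right W.dh3.symm W.d23.symm) (sym2_ne_left W.dh1 W.dh2)))
          (cline_sub_cpt (i := 2) (by omega) (by rw [W.cl2]; simp))
          (by rw [hfq]; exact (ne_of_psi (ψ := ψ) (by rw [W.psip3, W.psiq2]; exact (sym2_ne_left W.dh2 W.dh3))))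
          (by rw [hlast]; exact (ne_of_psi (ψ := ψ) (by rw [W.psip3, W.psip1]; exact (sym2_ne_right W.dh3.symm W.d13.symm))))
        exact (link_kill S hinj htri P hPΛ C hC hint W.hub W.v1 W.v2 W.v3
          (by rw [hfq]; exact W.psiq2) (by rw [hlast]; exact W.psip1)
          W.dh2.symm W.d12.symm W.dh3.symm W.d13.symm
          (Or.inl (mem_img_of (cline_sub_cpt (i := 2) (by omega) (by rw [W.cl2]; simp)) (W.psip2.trans Sym2.eq_swap)))
          (Or.inl (mem_img_of (cline_sub_cpt (i := 1) (by omega) (by rw [W.cl1]; simp)) (W.psiq1.trans Sym2.eq_swap)))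
          (by have := P.two_le; omega)).elim
      · exact ⟨2, by omega, hmid.1, by rw [hlast, W.cl2]; simp⟩
      · exact ⟨2, by omega, hmid.1, by rw [hlast, W.cl2]; simp⟩
      · exact ⟨3, by omega, hmid.1, by rw [hlast, W.cl3]; simp⟩
      ·
        have hfq : P.first = W.Q3 := by
          obtain ⟨hm1, hm2, hm3⟩ := hmid
          rw [W.cl3] at hm1
          rw [show (3 + 1) % C.n = 0 from by rw [hn4]] at hm3
          exact mem3_resolve hm1 hm2 hm3
        have hPn := comp1 S hsg P hPΛ C hint
          (C.cline 0) (C.cline 3)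
          (cline_mem_lambda (i := 0) hC (by omega)) (cline_mem_lambda (i := 3) hC (by omega))
          (cline_sub_cpt (i := 0) (by omega))
          (C.p 0) (C.p 3)
          (by rw [hlast, W.cl0]; simp)
          (by rw [W.cl0]; simp)
          (by rw [hlast]; exact (ne_of_psi (ψ := ψ) (by rw [W.psip1, W.psip0]; exact (sym2_ne_right W.dh1.symm W.d01.symm))))
          (by rw [W.cl3]; simp)
          (by rw [hfq, W.cl3]; simp)
          (by rw [hfq]; exact (notmem_of_psi (ψ := ψ) (by rw [img0, W.psiq3]; exact notmem3 (sym2_ne_left W.dh3.symm W.d03.symm) (sym2_ne_left W.dh3.symm W.d13.symm) (sym2_ne_left W.d03.symm W.d13.symm))))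
          (cline_sub_cpt (i := 3) (by omega) (by rw [W.cl3]; simp))
          (by rw [hfq]; exact (ne_of_psi (ψ := ψ) (by rw [W.psip0, W.psiq3]; exact (sym2_ne_left W.dh3 W.dh0))))
          (by rw [hlast]; exact (ne_of_psi (ψ := ψ) (by rw [W.psip0, W.psip1]; exact (sym2_ne_right W.dh0.symm W.d01))))
          (by rw [W.cl3]; simp)
          (notmem_of_psi (ψ := ψ) (by rw [img0, W.psip3]; exact notmem3 (sym2_ne_right W.dh3.symm W.d03.symm) (sym2_ne_right W.dh3.symm W.d13.symm) (sym2_ne_left W.dh0 W.dh1)))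
          (cline_sub_cpt (i := 3) (by omega) (by rw [W.cl3]; simp))
          (by rw [hfq]; exact (ne_of_psi (ψ := ψ) (by rw [W.psip3, W.psiq3]; exact (sym2_ne_left W.dh3 W.dh0))))
          (by rw [hlast]; exact (ne_of_psi (ψ := ψ) (by rw [W.psip3, W.psip1]; exact (sym2_ne_right W.dh3.symm W.d13.symm))))
        exact (link_kill S hinj htri P hPΛ C hC hint W.hub W.v1 W.v3 W.v0
          (by rw [hfq]; exact W.psiq3) (by rw [hlast]; exact W.psip1)
          W.dh3.symm W.d13.symm W.dh0.symm W.d01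
          (Or.inl (mem_img_of (cline_sub_cpt (i := 3) (by omega) (by rw [W.cl3]; simp)) (W.psip3.trans Sym2.eq_swap)))
          (Or.inr (mem_img_of (cline_sub_cpt (i := 0) (by omega) (by rw [W.cl0]; simp)) W.psiq0))
          (by have := P.two_le; omega)).elim
      ·
        have hfq : P.first = W.Q3 := by
          obtain ⟨hm1, hm2, hm3⟩ := hmid
          rw [W.cl3] at hm1
          rw [show (3 + 1) % C.n = 0 from by rw [hn4]] at hm3
          exact mem3_resolve hm1 hm2 hm3
        have hPn := comp1 S hsg P hPΛ C hint
          (C.cline 2) (C.cline 3)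
          (cline_mem_lambda (i := 2) hC (by omega)) (cline_mem_lambda (i := 3) hC (by omega))
          (cline_sub_cpt (i := 2) (by omega))
          (C.p 3) (C.p 0)
          (by rw [hlast, W.cl2]; simp)
          (by rw [W.cl2]; simp)
          (by rw [hlast]; exact (ne_of_psi (ψ := ψ) (by rw [W.psip2, W.psip3]; exact (sym2_ne_right W.dh2.symm W.d23))))
          (by rw [W.cl3]; simp)
          (by rw [hfq, W.cl3]; simp)
          (by rw [hfq]; exact (notmem_of_psi (ψ := ψ) (by rw [img2, W.psiq3]; exact notmem3 (sym2_ne_left W.dh3.symm W.d23.symm) (sym2_ne_right W.dh0.symm W.d03) (sym2_ne_right W.d02 W.d03))))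
          (cline_sub_cpt (i := 3) (by omega) (by rw [W.cl3]; simp))
          (by rw [hfq]; exact (ne_of_psi (ψ := ψ) (by rw [W.psip3, W.psiq3]; exact (sym2_ne_left W.dh3 W.dh0))))
          (by rw [hlast]; exact (ne_of_psi (ψ := ψ) (by rw [W.psip3, W.psip2]; exact (sym2_ne_right W.dh3.symm W.d23.symm))))
          (by rw [W.cl3]; simp)
          (notmem_of_psi (ψ := ψ) (by rw [img2, W.psip0]; exact notmem3 (sym2_ne_right W.dh0.symm W.d02) (sym2_ne_right W.dh0.symm W.d03) (sym2_ne_left W.dh2 W.dh3)))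
          (cline_sub_cpt (i := 3) (by omega) (by rw [W.cl3]; simp))
          (by rw [hfq]; exact (ne_of_psi (ψ := ψ) (by rw [W.psip0, W.psiq3]; exact (sym2_ne_left W.dh3 W.dh0))))
          (by rw [hlast]; exact (ne_of_psi (ψ := ψ) (by rw [W.psip0, W.psip2]; exact (sym2_ne_right W.dh0.symm W.d02))))
        exact (link_kill S hinj htri P hPΛ C hC hint W.hub W.v2 W.v3 W.v0
          (by rw [hfq]; exact W.psiq3) (by rw [hlast]; exact W.psip2)
          W.dh3.symm W.d23.symm W.dh0.symm W.d02
          (Or.inl (mem_img_of (cline_sub_cpt (i := 3) (by omega) (by rw [W.cl3]; simp)) (W.psip3.trans Sym2.eq_swap)))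
          (Or.inl (mem_img_of (cline_sub_cpt (i := 2) (by omega) (by rw [W.cl2]; simp)) (W.psiq2.trans Sym2.eq_swap)))
          (by have := P.two_le; omega)).elim
      · exact ⟨3, by omega, hmid.1, by rw [hlast, W.cl3]; simp⟩
  · -- type 2 links
    intro hT2
    obtain ⟨hfm, hlm, hfl, hint⟩ := hT2
    obtain ⟨i0, hi0, hmid⟩ := hfm
    obtain ⟨j0, hj0, hmid2⟩ := hlm
    rcases hsg C hC with hn3 | hn4
    · obtain ⟨W⟩ := wheel3 S hinj htri C hC hn3
      have img0 : (C.cline 0).image ψ = {s(W.hub, W.v0), s(W.hub, W.v1), s(W.v0, W.v1)} := by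
        rw [W.cl0, Finset.image_insert, Finset.image_insert, Finset.image_singleton,
          W.psip0, W.psip1, W.psiq0]
      have img1 : (C.cline 1).image ψ = {s(W.hub, W.v1), s(W.hub, W.v2), s(W.v1, W.v2)} := by
        rw [W.cl1, Finset.image_insert, Finset.image_insert, Finset.image_singleton,
          W.psip1, W.psip2, W.psiq1]
      have img2 : (C.cline 2).image ψ = {s(W.hub, W.v2), s(W.hub, W.v0), s(W.v2, W.v0)} := by
        rw [W.cl2, Finset.image_insert, Finset.image_insert, Finset.image_singleton,
          W.psip2, W.psip0, W.psiq2]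
      rw [hn3] at hi0 hj0
      interval_cases i0 <;> interval_cases j0
      · exact ⟨0, by omega, 0, by omega, hmid, hmid2, ⟨(C.p 0), Finset.mem_inter.mpr ⟨(by rw [W.cl0]; simp), (by rw [W.cl0]; simp)⟩⟩⟩
      · exact ⟨0, by omega, 1, by omega, hmid, hmid2, ⟨(C.p 1), Finset.mem_inter.mpr ⟨(by rw [W.cl0]; simp), (by rw [W.cl1]; simp)⟩⟩⟩
      · exact ⟨0, by omega, 2, by omega, hmid, hmid2, ⟨(C.p 0), Finset.mem_inter.mpr ⟨(by rw [W.cl0]; simp), (by rw [W.cl2]; simp)⟩⟩⟩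
      · exact ⟨1, by omega, 0, by omega, hmid, hmid2, ⟨(C.p 1), Finset.mem_inter.mpr ⟨(by rw [W.cl1]; simp), (by rw [W.cl0]; simp)⟩⟩⟩
      · exact ⟨1, by omega, 1, by omega, hmid, hmid2, ⟨(C.p 1), Finset.mem_inter.mpr ⟨(by rw [W.cl1]; simp), (by rw [W.cl1]; simp)⟩⟩⟩
      · exact ⟨1, by omega, 2, by omega, hmid, hmid2, ⟨(C.p 2), Finset.mem_inter.mpr ⟨(by rw [W.cl1]; simp), (by rw [W.cl2]; simp)⟩⟩⟩
      · exact ⟨2, by omega, 0, by omega, hmid, hmid2, ⟨(C.p 0), Finset.mem_inter.mpr ⟨(by rw [W.cl2]; simp), (by rw [W.cl0]; simp)⟩⟩⟩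
      · exact ⟨2, by omega, 1, by omega, hmid, hmid2, ⟨(C.p 2), Finset.mem_inter.mpr ⟨(by rw [W.cl2]; simp), (by rw [W.cl1]; simp)⟩⟩⟩
      · exact ⟨2, by omega, 2, by omega, hmid, hmid2, ⟨(C.p 2), Finset.mem_inter.mpr ⟨(by rw [W.cl2]; simp), (by rw [W.cl2]; simp)⟩⟩⟩
    · obtain ⟨W⟩ := wheel4 S hinj htri C hC hn4
      have img0 : (C.cline 0).image ψ = {s(W.hub, W.v0), s(W.hub, W.v1), s(W.v0, W.v1)} := by
        rw [W.cl0, Finset.image_insert, Finset.image_insert, Finset.image_singleton,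
          W.psip0, W.psip1, W.psiq0]
      have img1 : (C.cline 1).image ψ = {s(W.hub, W.v1), s(W.hub, W.v2), s(W.v1, W.v2)} := by
        rw [W.cl1, Finset.image_insert, Finset.image_insert, Finset.image_singleton,
          W.psip1, W.psip2, W.psiq1]
      have img2 : (C.cline 2).image ψ = {s(W.hub, W.v2), s(W.hub, W.v3), s(W.v2, W.v3)} := by
        rw [W.cl2, Finset.image_insert, Finset.image_insert, Finset.image_singleton,
          W.psip2, W.psip3, W.psiq2]
      have img3 : (C.cline 3).image ψ = {s(W.hub, W.v3), s(W.hub, W.v0), s(W.v3, W.v0)} := by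
        rw [W.cl3, Finset.image_insert, Finset.image_insert, Finset.image_singleton,
          W.psip3, W.psip0, W.psiq3]
      rw [hn4] at hi0 hj0
      interval_cases i0 <;> interval_cases j0
      · exact ⟨0, by omega, 0, by omega, hmid, hmid2, ⟨(C.p 0), Finset.mem_inter.mpr ⟨(by rw [W.cl0]; simp), (by rw [W.cl0]; simp)⟩⟩⟩
      · exact ⟨0, by omega, 1, by omega, hmid, hmid2, ⟨(C.p 1), Finset.mem_inter.mpr ⟨(by rw [W.cl0]; simp), (by rw [W.cl1]; simp)⟩⟩⟩
      ·
        have hfq : P.first = W.Q0 := by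
          obtain ⟨hm1, hm2, hm3⟩ := hmid
          rw [W.cl0] at hm1
          rw [show (0 + 1) % C.n = 1 from by rw [hn4]] at hm3
          exact mem3_resolve hm1 hm2 hm3
        have hlq : P.last = W.Q2 := by
          obtain ⟨hm1, hm2, hm3⟩ := hmid2
          rw [W.cl2] at hm1
          rw [show (2 + 1) % C.n = 3 from by rw [hn4]] at hm3
          exact mem3_resolve hm1 hm2 hm3
        have hPn := comp2 S hsg P hPΛ C hint
          (C.cline 2) (C.cline 3) (C.cline 0)
          (cline_mem_lambda (i := 2) hC (by omega)) (cline_mem_lambda (i := 3) hC (by omega)) (cline_mem_lambda (i := 0) hC (by omega))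
          (cline_sub_cpt (i := 2) (by omega)) (cline_sub_cpt (i := 3) (by omega))
          (C.p 3) (C.p 0) (C.p 1)
          (by rw [hlq, W.cl2]; simp)
          (by rw [W.cl2]; simp)
          (by rw [hlq]; exact (ne_of_psi (ψ := ψ) (by rw [W.psiq2, W.psip3]; exact (sym2_ne_left W.dh2.symm W.d23))))
          (by rw [W.cl3]; simp)
          (by rw [W.cl3]; simp)
          (ne_of_psi (ψ := ψ) (by rw [W.psip3, W.psip0]; exact (sym2_ne_right W.dh3.symm W.d03.symm)))
          (by rw [W.cl0]; simp)
          (by rw [hfq, W.cl0]; simp)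
          (by rw [hfq]; exact (notmem_of_psi (ψ := ψ) (by rw [img2, W.psiq0]; exact notmem3 (sym2_ne_left W.dh0.symm W.d02) (sym2_ne_left W.dh0.symm W.d03) (sym2_ne_left W.d02 W.d03))))
          (by rw [hfq]; exact (notmem_of_psi (ψ := ψ) (by rw [img3, W.psiq0]; exact notmem3 (sym2_ne_left W.dh0.symm W.d03) (sym2_ne_right W.dh1.symm W.d01.symm) (sym2_ne_right W.d13 W.d01.symm))))
          (by rw [hlq]; exact (notmem_of_psi (ψ := ψ) (by rw [img3, W.psiq2]; exact notmem3 (sym2_ne_left W.dh2.symm W.d23) (sym2_ne_left W.dh2.symm W.d02.symm) (sym2_ne_left W.d23 W.d02.symm))))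
          (notmem_of_psi (ψ := ψ) (by rw [img2, W.psip0]; exact notmem3 (sym2_ne_right W.dh0.symm W.d02) (sym2_ne_right W.dh0.symm W.d03) (sym2_ne_left W.dh2 W.dh3)))
          (cline_sub_cpt (i := 2) (by omega) (by rw [W.cl2]; simp))
          (by rw [hfq]; exact (ne_of_psi (ψ := ψ) (by rw [W.psip3, W.psiq0]; exact (sym2_ne_left W.dh0 W.dh1))))
          (by rw [hlq]; exact (ne_of_psi (ψ := ψ) (by rw [W.psip3, W.psiq2]; exact (sym2_ne_left W.dh2 W.dh3))))
          (cline_sub_cpt (i := 0) (by omega) (by rw [W.cl0]; simp))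
          (by rw [hfq]; exact (ne_of_psi (ψ := ψ) (by rw [W.psip0, W.psiq0]; exact (sym2_ne_left W.dh0 W.dh1))))
          (by rw [hlq]; exact (ne_of_psi (ψ := ψ) (by rw [W.psip0, W.psiq2]; exact (sym2_ne_left W.dh2 W.dh3))))
          (by rw [W.cl0]; simp)
          (notmem_of_psi (ψ := ψ) (by rw [img2, W.psip1]; exact notmem3 (sym2_ne_right W.dh1.symm W.d12) (sym2_ne_right W.dh1.symm W.d13) (sym2_ne_left W.dh2 W.dh3)))
          (notmem_of_psi (ψ := ψ) (by rw [img3, W.psip1]; exact notmem3 (sym2_ne_right W.dh1.symm W.d13) (sym2_ne_right W.dh1.symm W.d01.symm) (sym2_ne_left W.dh3 W.dh0)))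
          (cline_sub_cpt (i := 0) (by omega) (by rw [W.cl0]; simp))
          (by rw [hfq]; exact (ne_of_psi (ψ := ψ) (by rw [W.psip1, W.psiq0]; exact (sym2_ne_left W.dh0 W.dh1))))
          (by rw [hlq]; exact (ne_of_psi (ψ := ψ) (by rw [W.psip1, W.psiq2]; exact (sym2_ne_left W.dh2 W.dh3))))
        exact (link_kill S hinj htri P hPΛ C hC hint W.v2 W.v3 W.v0 W.v1
          (by rw [hfq]; exact W.psiq0) (by rw [hlq]; exact W.psiq2)
          W.d02 W.d03 W.d12 W.d13
          (Or.inr (mem_img_of (cline_sub_cpt (i := 1) (by omega) (by rw [W.cl1]; simp)) W.psiq1))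
          (Or.inl (mem_img_of (cline_sub_cpt (i := 3) (by omega) (by rw [W.cl3]; simp)) (W.psiq3.trans Sym2.eq_swap)))
          (Or.inl (by have := P.two_le; omega))).elim
      · exact ⟨0, by omega, 3, by omega, hmid, hmid2, ⟨(C.p 0), Finset.mem_inter.mpr ⟨(by rw [W.cl0]; simp), (by rw [W.cl3]; simp)⟩⟩⟩
      · exact ⟨1, by omega, 0, by omega, hmid, hmid2, ⟨(C.p 1), Finset.mem_inter.mpr ⟨(by rw [W.cl1]; simp), (by rw [W.cl0]; simp)⟩⟩⟩
      · exact ⟨1, by omega, 1, by omega, hmid, hmid2, ⟨(C.p 1), Finset.mem_inter.mpr ⟨(by rw [W.cl1]; simp), (by rw [W.cl1]; simp)⟩⟩⟩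
      · exact ⟨1, by omega, 2, by omega, hmid, hmid2, ⟨(C.p 2), Finset.mem_inter.mpr ⟨(by rw [W.cl1]; simp), (by rw [W.cl2]; simp)⟩⟩⟩
      ·
        have hfq : P.first = W.Q1 := by
          obtain ⟨hm1, hm2, hm3⟩ := hmid
          rw [W.cl1] at hm1
          rw [show (1 + 1) % C.n = 2 from by rw [hn4]] at hm3
          exact mem3_resolve hm1 hm2 hm3
        have hlq : P.last = W.Q3 := by
          obtain ⟨hm1, hm2, hm3⟩ := hmid2
          rw [W.cl3] at hm1
          rw [show (3 + 1) % C.n = 0 from by rw [hn4]] at hm3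
          exact mem3_resolve hm1 hm2 hm3
        have hPn := comp2 S hsg P hPΛ C hint
          (C.cline 3) (C.cline 0) (C.cline 1)
          (cline_mem_lambda (i := 3) hC (by omega)) (cline_mem_lambda (i := 0) hC (by omega)) (cline_mem_lambda (i := 1) hC (by omega))
          (cline_sub_cpt (i := 3) (by omega)) (cline_sub_cpt (i := 0) (by omega))
          (C.p 0) (C.p 1) (C.p 2)
          (by rw [hlq, W.cl3]; simp)
          (by rw [W.cl3]; simp)
          (by rw [hlq]; exact (ne_of_psi (ψ := ψ) (by rw [W.psiq3, W.psip0]; exact (sym2_ne_left W.dh3.symm W.d03.symm))))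
          (by rw [W.cl0]; simp)
          (by rw [W.cl0]; simp)
          (ne_of_psi (ψ := ψ) (by rw [W.psip0, W.psip1]; exact (sym2_ne_right W.dh0.symm W.d01)))
          (by rw [W.cl1]; simp)
          (by rw [hfq, W.cl1]; simp)
          (by rw [hfq]; exact (notmem_of_psi (ψ := ψ) (by rw [img3, W.psiq1]; exact notmem3 (sym2_ne_left W.dh1.symm W.d13) (sym2_ne_left W.dh1.symm W.d01.symm) (sym2_ne_left W.d13 W.d01.symm))))
          (by rw [hfq]; exact (notmem_of_psi (ψ := ψ) (by rw [img0, W.psiq1]; exact notmem3 (sym2_ne_left W.dh1.symm W.d01.symm) (sym2_ne_right W.dh2.symm W.d12.symm) (sym2_ne_right W.d02.symm W.d12.symm))))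
          (by rw [hlq]; exact (notmem_of_psi (ψ := ψ) (by rw [img0, W.psiq3]; exact notmem3 (sym2_ne_left W.dh3.symm W.d03.symm) (sym2_ne_left W.dh3.symm W.d13.symm) (sym2_ne_left W.d03.symm W.d13.symm))))
          (notmem_of_psi (ψ := ψ) (by rw [img3, W.psip1]; exact notmem3 (sym2_ne_right W.dh1.symm W.d13) (sym2_ne_right W.dh1.symm W.d01.symm) (sym2_ne_left W.dh3 W.dh0)))
          (cline_sub_cpt (i := 3) (by omega) (by rw [W.cl3]; simp))
          (by rw [hfq]; exact (ne_of_psi (ψ := ψ) (by rw [W.psip0, W.psiq1]; exact (sym2_ne_left W.dh1 W.dh2))))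
          (by rw [hlq]; exact (ne_of_psi (ψ := ψ) (by rw [W.psip0, W.psiq3]; exact (sym2_ne_left W.dh3 W.dh0))))
          (cline_sub_cpt (i := 1) (by omega) (by rw [W.cl1]; simp))
          (by rw [hfq]; exact (ne_of_psi (ψ := ψ) (by rw [W.psip1, W.psiq1]; exact (sym2_ne_left W.dh1 W.dh2))))
          (by rw [hlq]; exact (ne_of_psi (ψ := ψ) (by rw [W.psip1, W.psiq3]; exact (sym2_ne_left W.dh3 W.dh0))))
          (by rw [W.cl1]; simp)
          (notmem_of_psi (ψ := ψ) (by rw [img3, W.psip2]; exact notmem3 (sym2_ne_right W.dh2.symm W.d23) (sym2_ne_right W.dh2.symm W.d02.symm) (sym2_ne_left W.dh3 W.dh0)))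
          (notmem_of_psi (ψ := ψ) (by rw [img0, W.psip2]; exact notmem3 (sym2_ne_right W.dh2.symm W.d02.symm) (sym2_ne_right W.dh2.symm W.d12.symm) (sym2_ne_left W.dh0 W.dh1)))
          (cline_sub_cpt (i := 1) (by omega) (by rw [W.cl1]; simp))
          (by rw [hfq]; exact (ne_of_psi (ψ := ψ) (by rw [W.psip2, W.psiq1]; exact (sym2_ne_left W.dh1 W.dh2))))
          (by rw [hlq]; exact (ne_of_psi (ψ := ψ) (by rw [W.psip2, W.psiq3]; exact (sym2_ne_left W.dh3 W.dh0))))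
        exact (link_kill S hinj htri P hPΛ C hC hint W.v3 W.v0 W.v1 W.v2
          (by rw [hfq]; exact W.psiq1) (by rw [hlq]; exact W.psiq3)
          W.d13 W.d01.symm W.d23 W.d02.symm
          (Or.inr (mem_img_of (cline_sub_cpt (i := 2) (by omega) (by rw [W.cl2]; simp)) W.psiq2))
          (Or.inl (mem_img_of (cline_sub_cpt (i := 0) (by omega) (by rw [W.cl0]; simp)) (W.psiq0.trans Sym2.eq_swap)))
          (Or.inl (by have := P.two_le; omega))).elim
      ·
        have hfq : P.first = W.Q2 := by
          obtain ⟨hm1, hm2, hm3⟩ := hmid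
          rw [W.cl2] at hm1
          rw [show (2 + 1) % C.n = 3 from by rw [hn4]] at hm3
          exact mem3_resolve hm1 hm2 hm3
        have hlq : P.last = W.Q0 := by
          obtain ⟨hm1, hm2, hm3⟩ := hmid2
          rw [W.cl0] at hm1
          rw [show (0 + 1) % C.n = 1 from by rw [hn4]] at hm3
          exact mem3_resolve hm1 hm2 hm3
        have hPn := comp2 S hsg P hPΛ C hint
          (C.cline 0) (C.cline 1) (C.cline 2)
          (cline_mem_lambda (i := 0) hC (by omega)) (cline_mem_lambda (i := 1) hC (by omega)) (cline_mem_lambda (i := 2) hC (by omega))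
          (cline_sub_cpt (i := 0) (by omega)) (cline_sub_cpt (i := 1) (by omega))
          (C.p 1) (C.p 2) (C.p 3)
          (by rw [hlq, W.cl0]; simp)
          (by rw [W.cl0]; simp)
          (by rw [hlq]; exact (ne_of_psi (ψ := ψ) (by rw [W.psiq0, W.psip1]; exact (sym2_ne_left W.dh0.symm W.d01))))
          (by rw [W.cl1]; simp)
          (by rw [W.cl1]; simp)
          (ne_of_psi (ψ := ψ) (by rw [W.psip1, W.psip2]; exact (sym2_ne_right W.dh1.symm W.d12)))
          (by rw [W.cl2]; simp)
          (by rw [hfq, W.cl2]; simp)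
          (by rw [hfq]; exact (notmem_of_psi (ψ := ψ) (by rw [img0, W.psiq2]; exact notmem3 (sym2_ne_left W.dh2.symm W.d02.symm) (sym2_ne_left W.dh2.symm W.d12.symm) (sym2_ne_left W.d02.symm W.d12.symm))))
          (by rw [hfq]; exact (notmem_of_psi (ψ := ψ) (by rw [img1, W.psiq2]; exact notmem3 (sym2_ne_left W.dh2.symm W.d12.symm) (sym2_ne_right W.dh3.symm W.d23.symm) (sym2_ne_right W.d13.symm W.d23.symm))))
          (by rw [hlq]; exact (notmem_of_psi (ψ := ψ) (by rw [img1, W.psiq0]; exact notmem3 (sym2_ne_left W.dh0.symm W.d01) (sym2_ne_left W.dh0.symm W.d02) (sym2_ne_left W.d01 W.d02))))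
          (notmem_of_psi (ψ := ψ) (by rw [img0, W.psip2]; exact notmem3 (sym2_ne_right W.dh2.symm W.d02.symm) (sym2_ne_right W.dh2.symm W.d12.symm) (sym2_ne_left W.dh0 W.dh1)))
          (cline_sub_cpt (i := 0) (by omega) (by rw [W.cl0]; simp))
          (by rw [hfq]; exact (ne_of_psi (ψ := ψ) (by rw [W.psip1, W.psiq2]; exact (sym2_ne_left W.dh2 W.dh3))))
          (by rw [hlq]; exact (ne_of_psi (ψ := ψ) (by rw [W.psip1, W.psiq0]; exact (sym2_ne_left W.dh0 W.dh1))))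
          (cline_sub_cpt (i := 2) (by omega) (by rw [W.cl2]; simp))
          (by rw [hfq]; exact (ne_of_psi (ψ := ψ) (by rw [W.psip2, W.psiq2]; exact (sym2_ne_left W.dh2 W.dh3))))
          (by rw [hlq]; exact (ne_of_psi (ψ := ψ) (by rw [W.psip2, W.psiq0]; exact (sym2_ne_left W.dh0 W.dh1))))
          (by rw [W.cl2]; simp)
          (notmem_of_psi (ψ := ψ) (by rw [img0, W.psip3]; exact notmem3 (sym2_ne_right W.dh3.symm W.d03.symm) (sym2_ne_right W.dh3.symm W.d13.symm) (sym2_ne_left W.dh0 W.dh1)))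
          (notmem_of_psi (ψ := ψ) (by rw [img1, W.psip3]; exact notmem3 (sym2_ne_right W.dh3.symm W.d13.symm) (sym2_ne_right W.dh3.symm W.d23.symm) (sym2_ne_left W.dh1 W.dh2)))
          (cline_sub_cpt (i := 2) (by omega) (by rw [W.cl2]; simp))
          (by rw [hfq]; exact (ne_of_psi (ψ := ψ) (by rw [W.psip3, W.psiq2]; exact (sym2_ne_left W.dh2 W.dh3))))
          (by rw [hlq]; exact (ne_of_psi (ψ := ψ) (by rw [W.psip3, W.psiq0]; exact (sym2_ne_left W.dh0 W.dh1))))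
        exact (link_kill S hinj htri P hPΛ C hC hint W.v0 W.v1 W.v2 W.v3
          (by rw [hfq]; exact W.psiq2) (by rw [hlq]; exact W.psiq0)
          W.d02.symm W.d12.symm W.d03.symm W.d13.symm
          (Or.inr (mem_img_of (cline_sub_cpt (i := 3) (by omega) (by rw [W.cl3]; simp)) W.psiq3))
          (Or.inl (mem_img_of (cline_sub_cpt (i := 1) (by omega) (by rw [W.cl1]; simp)) (W.psiq1.trans Sym2.eq_swap)))
          (Or.inl (by have := P.two_le; omega))).elim
      · exact ⟨2, by omega, 1, by omega, hmid, hmid2, ⟨(C.p 2), Finset.mem_inter.mpr ⟨(by rw [W.cl2]; simp), (by rw [W.cl1]; simp)⟩⟩⟩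
      · exact ⟨2, by omega, 2, by omega, hmid, hmid2, ⟨(C.p 2), Finset.mem_inter.mpr ⟨(by rw [W.cl2]; simp), (by rw [W.cl2]; simp)⟩⟩⟩
      · exact ⟨2, by omega, 3, by omega, hmid, hmid2, ⟨(C.p 3), Finset.mem_inter.mpr ⟨(by rw [W.cl2]; simp), (by rw [W.cl3]; simp)⟩⟩⟩
      · exact ⟨3, by omega, 0, by omega, hmid, hmid2, ⟨(C.p 0), Finset.mem_inter.mpr ⟨(by rw [W.cl3]; simp), (by rw [W.cl0]; simp)⟩⟩⟩
      ·
        have hfq : P.first = W.Q3 := by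
          obtain ⟨hm1, hm2, hm3⟩ := hmid
          rw [W.cl3] at hm1
          rw [show (3 + 1) % C.n = 0 from by rw [hn4]] at hm3
          exact mem3_resolve hm1 hm2 hm3
        have hlq : P.last = W.Q1 := by
          obtain ⟨hm1, hm2, hm3⟩ := hmid2
          rw [W.cl1] at hm1
          rw [show (1 + 1) % C.n = 2 from by rw [hn4]] at hm3
          exact mem3_resolve hm1 hm2 hm3
        have hPn := comp2 S hsg P hPΛ C hint
          (C.cline 1) (C.cline 2) (C.cline 3)
          (cline_mem_lambda (i := 1) hC (by omega)) (cline_mem_lambda (i := 2) hC (by omega)) (cline_mem_lambda (i := 3) hC (by omega))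
          (cline_sub_cpt (i := 1) (by omega)) (cline_sub_cpt (i := 2) (by omega))
          (C.p 2) (C.p 3) (C.p 0)
          (by rw [hlq, W.cl1]; simp)
          (by rw [W.cl1]; simp)
          (by rw [hlq]; exact (ne_of_psi (ψ := ψ) (by rw [W.psiq1, W.psip2]; exact (sym2_ne_left W.dh1.symm W.d12))))
          (by rw [W.cl2]; simp)
          (by rw [W.cl2]; simp)
          (ne_of_psi (ψ := ψ) (by rw [W.psip2, W.psip3]; exact (sym2_ne_right W.dh2.symm W.d23)))
          (by rw [W.cl3]; simp)
          (by rw [hfq, W.cl3]; simp)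
          (by rw [hfq]; exact (notmem_of_psi (ψ := ψ) (by rw [img1, W.psiq3]; exact notmem3 (sym2_ne_left W.dh3.symm W.d13.symm) (sym2_ne_left W.dh3.symm W.d23.symm) (sym2_ne_left W.d13.symm W.d23.symm))))
          (by rw [hfq]; exact (notmem_of_psi (ψ := ψ) (by rw [img2, W.psiq3]; exact notmem3 (sym2_ne_left W.dh3.symm W.d23.symm) (sym2_ne_right W.dh0.symm W.d03) (sym2_ne_right W.d02 W.d03))))
          (by rw [hlq]; exact (notmem_of_psi (ψ := ψ) (by rw [img2, W.psiq1]; exact notmem3 (sym2_ne_left W.dh1.symm W.d12) (sym2_ne_left W.dh1.symm W.d13) (sym2_ne_left W.d12 W.d13))))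
          (notmem_of_psi (ψ := ψ) (by rw [img1, W.psip3]; exact notmem3 (sym2_ne_right W.dh3.symm W.d13.symm) (sym2_ne_right W.dh3.symm W.d23.symm) (sym2_ne_left W.dh1 W.dh2)))
          (cline_sub_cpt (i := 1) (by omega) (by rw [W.cl1]; simp))
          (by rw [hfq]; exact (ne_of_psi (ψ := ψ) (by rw [W.psip2, W.psiq3]; exact (sym2_ne_left W.dh3 W.dh0))))
          (by rw [hlq]; exact (ne_of_psi (ψ := ψ) (by rw [W.psip2, W.psiq1]; exact (sym2_ne_left W.dh1 W.dh2))))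
          (cline_sub_cpt (i := 3) (by omega) (by rw [W.cl3]; simp))
          (by rw [hfq]; exact (ne_of_psi (ψ := ψ) (by rw [W.psip3, W.psiq3]; exact (sym2_ne_left W.dh3 W.dh0))))
          (by rw [hlq]; exact (ne_of_psi (ψ := ψ) (by rw [W.psip3, W.psiq1]; exact (sym2_ne_left W.dh1 W.dh2))))
          (by rw [W.cl3]; simp)
          (notmem_of_psi (ψ := ψ) (by rw [img1, W.psip0]; exact notmem3 (sym2_ne_right W.dh0.symm W.d01) (sym2_ne_right W.dh0.symm W.d02) (sym2_ne_left W.dh1 W.dh2)))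
          (notmem_of_psi (ψ := ψ) (by rw [img2, W.psip0]; exact notmem3 (sym2_ne_right W.dh0.symm W.d02) (sym2_ne_right W.dh0.symm W.d03) (sym2_ne_left W.dh2 W.dh3)))
          (cline_sub_cpt (i := 3) (by omega) (by rw [W.cl3]; simp))
          (by rw [hfq]; exact (ne_of_psi (ψ := ψ) (by rw [W.psip0, W.psiq3]; exact (sym2_ne_left W.dh3 W.dh0))))
          (by rw [hlq]; exact (ne_of_psi (ψ := ψ) (by rw [W.psip0, W.psiq1]; exact (sym2_ne_left W.dh1 W.dh2))))
        exact (link_kill S hinj htri P hPΛ C hC hint W.v1 W.v2 W.v3 W.v0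
          (by rw [hfq]; exact W.psiq3) (by rw [hlq]; exact W.psiq1)
          W.d13.symm W.d23.symm W.d01 W.d02
          (Or.inr (mem_img_of (cline_sub_cpt (i := 0) (by omega) (by rw [W.cl0]; simp)) W.psiq0))
          (Or.inl (mem_img_of (cline_sub_cpt (i := 2) (by omega) (by rw [W.cl2]; simp)) (W.psiq2.trans Sym2.eq_swap)))
          (Or.inl (by have := P.two_le; omega))).elim
      · exact ⟨3, by omega, 2, by omega, hmid, hmid2, ⟨(C.p 3), Finset.mem_inter.mpr ⟨(by rw [W.cl3]; simp), (by rw [W.cl2]; simp)⟩⟩⟩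
      · exact ⟨3, by omega, 3, by omega, hmid, hmid2, ⟨(C.p 3), Finset.mem_inter.mpr ⟨(by rw [W.cl3]; simp), (by rw [W.cl3]; simp)⟩⟩⟩

end
end

section
/- Let k be a field and L a finite modular lattice of height n=d(L). If L is lattice-modeled by a finite set E of vectors in a k-vector space, equipped with the linear-dependence matroid, via a bijection φ:J(L)→E, then Φ(a) := span(φ(J(a))) defines a tight embedding of L into the subspace lattice of k^n. Conversely, every tight embedding Φ′ of L into the subspace lattice of k^m arises, after identifying the subspace Φ′(1) with k^n, from such a φ-induced tight embedding of L into the subspace lattice of k^n. -/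
open scoped Classical
noncomputable section

/-! ### Linear-algebraic modeling -/

/-- A simple set of vectors: no zero vector, no two distinct proportional vectors. -/
def SimpleVecSet (k : Type*) [Field k] {W : Type*} [AddCommGroup W] [Module k W]
    (E : Finset W) : Prop :=
  (0 : W) ∉ E ∧ ∀ v ∈ E, ∀ w ∈ E, v ≠ w → ∀ c : k, w ≠ c • v

/-- `φ` lattice-models `L` by the set `E` of vectors (with the linear-dependence
matroid): `E` is simple, each `span(φ(J(a))) ∩ E = φ(J(a))`, and `dim span E = d(L)`. -/
def LatticeModelsVec (k : Type*) [Field k] {W : Type*} [AddCommGroup W] [Module k W]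
    (L : Type*) [Lattice L] [BoundedOrder L] [Fintype L] (E : Finset W) (φ : L → W) : Prop :=
  Set.BijOn φ (JFinset L : Set L) (E : Set W) ∧ SimpleVecSet k E ∧
    (∀ a : L, (Submodule.span k (((Jle a).image φ : Finset W) : Set W) : Set W) ∩ (E : Set W)
        = (((Jle a).image φ : Finset W) : Set W)) ∧
    Module.finrank k (Submodule.span k ((E : Finset W) : Set W)) = latHeight L


/-!
A finite modular lattice satisfies the Jordan–Dedekind chain condition, so its height is an
`ℕ`-grading, and this grading is modular: `grade (a ⊔ b) + grade (a ⊓ b) = grade a + grade b`.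

If `φ` lattice-models `L`, the closedness of the sets `φ(J(a))` makes `V a = span φ(J(a))` an
order embedding. As `dim V ⊤ = d(L)`, the strictly increasing function `a ↦ dim V a` is squeezed
to the grade along chains through `a`, so `V` preserves covers; joins are then preserved because
covers transpose in a modular lattice, and meets by the dimension formula.

Conversely, let `Φ` be a tight embedding. A join-irreducible `p` has a greatest element `q`
strictly below it; choose `φ p ∈ Φ p \ Φ q`. Then `φ p ∈ Φ a ↔ p ≤ a`, since `Φ` preserves meets.
Hence `a ↦ span φ(J(a)) ≤ Φ a` is again an order embedding, of dimension at least
`grade a = dim Φ a`, which forces equality; the modeling axioms follow from the same criterion.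
-/

theorem Order.height_ne_top_of_finite {α : Type*} [Preorder α] [Finite α] (a : α) :
    Order.height a ≠ ⊤ := by
  have := Fintype.ofFinite α
  refine ne_top_of_le_ne_top (ENat.natCast_ne_top (Fintype.card α))
    (Order.height_le fun p _ => ?_)
  exact_mod_cast p.length_lt_card.le

theorem CovBy.sup_covBy_sup_of_inf_le {L : Type*} [Lattice L] [IsModularLattice L] {a a' b : L}
    (h : a' ⋖ a) (hb : a ⊓ b ≤ a') : a' ⊔ b ⋖ a ⊔ b := by
  have hmod : a ⊓ (a' ⊔ b) = a' := by
    rw [inf_comm, sup_inf_assoc_of_le b h.le, inf_comm, sup_eq_left.2 hb]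
  have := covBy_sup_of_inf_covBy_left (hmod ▸ h)
  rwa [← sup_assoc, sup_eq_left.2 h.le] at this

namespace IsModularLattice

variable {L : Type*} [Lattice L] [Finite L] [IsModularLattice L]

open Order in
theorem height_eq_height_add_one_of_covBy {a b : L} (hab : a ⋖ b) :
    height b = height a + 1 := by
  induction b using WellFoundedLT.induction generalizing a with
  | _ b ih =>
  have lower_covers : ∀ c, c ⋖ b → height c = height a := by
    intro c hcb
    rcases eq_or_ne c a with rfl | hca
    · rfl
    have hsup : a ⊔ c = b := hab.wcovBy.sup_eq hcb.wcovBy hca.symm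
    subst hsup
    rw [ih c hcb.lt (inf_covBy_of_covBy_sup_of_covBy_sup_right hab hcb),
      ih a hab.lt (inf_covBy_of_covBy_sup_of_covBy_sup_left hab hcb)]
  refine le_antisymm ?_ (height_add_one_le hab.lt)
  rw [height_eq_iSup_lt_height b]
  refine iSup₂_le fun y hy => ?_
  obtain ⟨c, hyc, hcb⟩ := exists_le_covBy_of_lt hy
  grw [height_mono hyc, lower_covers c hcb]

abbrev gradeMinOrder : GradeMinOrder ℕ L where
  grade a := (Order.height a).toNat
  grade_strictMono a b hab := by
    have hlt := Order.height_strictMono hab (Order.height_ne_top_of_finite a).lt_top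
    rwa [← ENat.natCast_toNat_eq_self.2 (Order.height_ne_top_of_finite a),
      ← ENat.natCast_toNat_eq_self.2 (Order.height_ne_top_of_finite b), Nat.cast_lt] at hlt
  covBy_grade a b hab := by
    rw [height_eq_height_add_one_of_covBy hab, ENat.toNat_add (Order.height_ne_top_of_finite a)
      ENat.one_ne_top]
    exact Nat.covBy_iff_add_one_eq.2 rfl
  isMin_grade a ha := by simp [Order.height_eq_zero.2 ha]

end IsModularLattice

section Graded

variable {L : Type*} [Lattice L]

theorem grade_sup_add_grade_inf [Finite L] [IsModularLattice L] [GradeOrder ℕ L] (a b : L) :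
    grade ℕ (a ⊔ b) + grade ℕ (a ⊓ b) = grade ℕ a + grade ℕ b := by
  induction a using WellFoundedLT.induction with
  | _ a ih =>
  by_cases hab : a ≤ b
  · rw [sup_eq_right.2 hab, inf_eq_left.2 hab, add_comm]
  obtain ⟨a', hba', ha'a⟩ := exists_le_covBy_of_lt (inf_lt_left.2 hab)
  have hinf : a' ⊓ b = a ⊓ b :=
    le_antisymm (inf_le_inf_right b ha'a.le) (le_inf hba' inf_le_right)
  have hcov : a' ⊔ b ⋖ a ⊔ b := ha'a.sup_covBy_sup_of_inf_le hba'
  have ih' := ih a' ha'a.lt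
  rw [hinf] at ih'
  have e1 := Nat.covBy_iff_add_one_eq.1 (ha'a.grade ℕ)
  have e2 := Nat.covBy_iff_add_one_eq.1 (hcov.grade ℕ)
  omega

theorem grade_add_le_grade_add_of_strictMono [Finite L] [GradeOrder ℕ L] {f : L → ℕ}
    (hf : StrictMono f) {a b : L} (hab : a ≤ b) : grade ℕ b + f a ≤ grade ℕ a + f b := by
  induction a using WellFoundedGT.induction with
  | _ a ih =>
  rcases hab.eq_or_lt with rfl | hlt
  · rfl
  obtain ⟨c, hac, hcb⟩ := exists_covBy_le_of_lt hlt
  have := ih c hac.lt hcb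
  have e1 := Nat.covBy_iff_add_one_eq.1 (hac.grade ℕ)
  have e2 := hf hac.lt
  omega

variable [OrderBot L] [GradeMinOrder ℕ L]

theorem eq_grade_of_covBy [Finite L] {f : L → ℕ} (hbot : f ⊥ = 0)
    (hcov : ∀ a b : L, a ⋖ b → f b = f a + 1) (a : L) : f a = grade ℕ a := by
  induction a using WellFoundedLT.induction with
  | _ a ih =>
  rcases (bot_le : ⊥ ≤ a).eq_or_lt with rfl | hlt
  · rw [hbot, grade_bot (𝕆 := ℕ), Nat.bot_eq_zero]
  obtain ⟨c, -, hca⟩ := exists_le_covBy_of_lt hlt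
  rw [hcov c a hca, ih c hca.lt, Nat.covBy_iff_add_one_eq.1 (hca.grade ℕ)]

theorem exists_chain_card_eq_grade_add_one [Finite L] (a : L) :
    ∃ c : Finset L, IsChain (· ≤ ·) (c : Set L) ∧ c.card = grade ℕ a + 1 ∧ ∀ x ∈ c, x ≤ a := by
  induction a using WellFoundedLT.induction with
  | _ a ih =>
  rcases (bot_le : ⊥ ≤ a).eq_or_lt with rfl | hlt
  · exact ⟨{⊥}, by simp, by simp [grade_bot (𝕆 := ℕ)], by simp⟩
  obtain ⟨b, -, hba⟩ := exists_le_covBy_of_lt hlt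
  obtain ⟨c, hc, hcard, hcb⟩ := ih b hba.lt
  have ha : a ∉ c := fun ha => hba.lt.not_ge (hcb a ha)
  refine ⟨insert a c, ?_, ?_, ?_⟩
  · rw [Finset.coe_insert]
    exact hc.insert fun x hx _ => Or.inr ((hcb x hx).trans hba.le)
  · rw [Finset.card_insert_of_notMem ha, hcard, ← Nat.covBy_iff_add_one_eq.1 (hba.grade ℕ)]
  · simpa using fun x hx => (hcb x hx).trans hba.le

theorem latHeight_eq_grade_top [Fintype L] [OrderTop L] : latHeight L = grade ℕ (⊤ : L) := by
  have card_le : ∀ c : Finset L, IsChain (· ≤ ·) (c : Set L) → c.card ≤ grade ℕ (⊤ : L) + 1 := by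
    intro c hc
    refine (Finset.card_le_card_of_injOn (grade ℕ) (t := Finset.range (grade ℕ (⊤ : L) + 1))
      (fun x _ => by simpa [Nat.lt_succ_iff] using grade_mono le_top) ?_).trans_eq
      (Finset.card_range _)
    intro x hx y hy hxy
    by_contra hne
    rcases hc hx hy hne with h | h
    · exact (grade_strictMono (h.lt_of_ne hne)).ne hxy
    · exact (grade_strictMono (h.lt_of_ne (Ne.symm hne))).ne' hxy
  obtain ⟨c, hc, hcard, -⟩ := exists_chain_card_eq_grade_add_one (⊤ : L)
  have hsup : ((Finset.univ.filter fun c : Finset L => IsChain (· ≤ ·) (c : Set L)).sup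
      Finset.card) = grade ℕ (⊤ : L) + 1 :=
    le_antisymm (Finset.sup_le fun c hc => card_le c (Finset.mem_filter.1 hc).2)
      (hcard ▸ Finset.le_sup (Finset.mem_filter.2 ⟨Finset.mem_univ c, hc⟩))
  rw [latHeight, hsup, Nat.add_sub_cancel]

end Graded

namespace OrderEmbedding

variable {L L' : Type*} [Lattice L] [Finite L] [IsModularLattice L] [Lattice L']

theorem map_sup_of_map_covBy (f : L ↪o L') (hf : ∀ {a b : L}, a ⋖ b → f a ⋖ f b) (a b : L) :
    f (a ⊔ b) = f a ⊔ f b := by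
  induction b using WellFoundedLT.induction with
  | _ b ih =>
  by_cases hba : b ≤ a
  · rw [sup_eq_left.2 hba, sup_eq_left.2 (f.monotone hba)]
  obtain ⟨b', hb', hb'b⟩ := exists_le_covBy_of_lt (inf_lt_right.2 hba)
  have hcov : a ⊔ b' ⋖ a ⊔ b := by
    simpa only [sup_comm a] using hb'b.sup_covBy_sup_of_inf_le (inf_comm a b ▸ hb')
  have hlt : f (a ⊔ b') < f a ⊔ f b := by
    refine lt_of_le_of_ne ?_ fun h => ?_
    · rw [ih b' hb'b.lt]
      exact sup_le_sup_left (f.monotone hb'b.le) _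
    · have hb : b ≤ a ⊔ b' := f.le_iff_le.1 (h ▸ le_sup_right)
      exact hcov.lt.ne (le_antisymm hcov.le (sup_le le_sup_left hb))
  have hle : f a ⊔ f b ≤ f (a ⊔ b) := sup_le (f.monotone le_sup_left) (f.monotone le_sup_right)
  exact (hle.lt_or_eq.resolve_left ((hf hcov).2 hlt)).symm

end OrderEmbedding

theorem Submodule.covBy_iff_finrank_eq_add_one {k W : Type*} [Field k] [AddCommGroup W]
    [Module k W] {A B : Submodule k W} [FiniteDimensional k B] (hAB : A ≤ B) :
    A ⋖ B ↔ Module.finrank k B = Module.finrank k A + 1 := by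
  rw [covBy_iff_quot_is_simple hAB, isSimpleModule_iff_finrank_eq_one,
    ← Submodule.finrank_quotient_add_finrank (A.comap B.subtype),
    (Submodule.comapSubtypeEquivOfLe hAB).finrank_eq]
  omega

section TightEmbedding

variable {L L' : Type*} [Lattice L] [BoundedOrder L] [Lattice L'] [BoundedOrder L']

theorem IsTightEmbedding.monotone {f : L → L'} (hf : IsTightEmbedding f) : Monotone f :=
  fun a b hab => by simpa [inf_eq_left.2 hab] using (hf.2.1 a b).le

theorem IsTightEmbedding.strictMono [Finite L] {f : L → L'} (hf : IsTightEmbedding f) :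
    StrictMono f := fun a b hab => by
  obtain ⟨c, hac, hcb⟩ := exists_covBy_le_of_lt hab
  exact (hf.2.2.2 a c hac).lt.trans_le (hf.monotone hcb)

variable {k W : Type*} [Field k] [AddCommGroup W] [Module k W]

theorem IsTightEmbedding.finrank_eq_grade [Finite L] [GradeMinOrder ℕ L] [FiniteDimensional k W]
    {Φ : L → Submodule k W} (hΦ : IsTightEmbedding Φ) (a : L) :
    Module.finrank k (Φ a) = grade ℕ a :=
  eq_grade_of_covBy (f := fun a => Module.finrank k (Φ a)) (by simp [hΦ.2.2.1])
    (fun a b hab => (Submodule.covBy_iff_finrank_eq_add_one (hΦ.monotone hab.le)).1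
      (hΦ.2.2.2 a b hab)) a

theorem OrderEmbedding.isTightEmbedding_of_finrank_top [Finite L] [IsModularLattice L]
    [GradeMinOrder ℕ L] (V : L ↪o Submodule k W) [FiniteDimensional k (V ⊤)]
    (htop : Module.finrank k (V ⊤) = grade ℕ (⊤ : L)) : IsTightEmbedding V := by
  have : ∀ a, FiniteDimensional k (V a) :=
    fun a => Submodule.finiteDimensional_of_le (V.monotone le_top)
  have hrank : ∀ a, Module.finrank k (V a) = grade ℕ a := by
    intro a
    have hf : StrictMono fun a => Module.finrank k (V a) :=
      fun a b hab => Submodule.finrank_lt_finrank_of_lt (V.strictMono hab)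
    have h1 := grade_add_le_grade_add_of_strictMono hf (bot_le : ⊥ ≤ a)
    have h2 := grade_add_le_grade_add_of_strictMono hf (le_top : a ≤ ⊤)
    simp only [grade_bot, Nat.bot_eq_zero] at h1
    omega
  have hcov : ∀ {a b : L}, a ⋖ b → V a ⋖ V b := fun {a b} hab => by
    rw [Submodule.covBy_iff_finrank_eq_add_one (V.monotone hab.le), hrank, hrank]
    exact (Nat.covBy_iff_add_one_eq.1 (hab.grade ℕ)).symm
  have hsup := V.map_sup_of_map_covBy hcov
  refine ⟨hsup, fun a b => ?_, ?_, fun a b => hcov⟩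
  · refine Submodule.eq_of_le_of_finrank_le (le_inf (V.monotone inf_le_left)
      (V.monotone inf_le_right)) ?_
    have h1 := Submodule.finrank_sup_add_finrank_inf_eq (V a) (V b)
    have h2 := grade_sup_add_grade_inf a b
    rw [← hsup, hrank, hrank, hrank] at h1
    rw [hrank]
    omega
  · rw [← Submodule.finrank_eq_zero, hrank, grade_bot, Nat.bot_eq_zero]

end TightEmbedding

section Jle

variable {L : Type*} [Lattice L] [Fintype L]

theorem mem_Jle {p a : L} : p ∈ Jle a ↔ SupIrred p ∧ p ≤ a := by simp [Jle]

theorem mem_JFinset {p : L} : p ∈ JFinset L ↔ SupIrred p := by simp [JFinset]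

theorem Jle_mono {a b : L} (h : a ≤ b) : Jle a ⊆ Jle b :=
  fun _ hp => mem_Jle.2 ⟨(mem_Jle.1 hp).1, (mem_Jle.1 hp).2.trans h⟩

theorem Jle_subset_JFinset (a : L) : Jle a ⊆ JFinset L :=
  fun _ hp => mem_JFinset.2 (mem_Jle.1 hp).1

theorem Jle_top [OrderTop L] : Jle (⊤ : L) = JFinset L := by
  ext p
  simp [mem_Jle, mem_JFinset]

theorem le_of_forall_supIrred_le [OrderBot L] {a b : L}
    (h : ∀ p, SupIrred p → p ≤ a → p ≤ b) : a ≤ b := by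
  obtain ⟨s, rfl, hs⟩ := exists_supIrred_decomposition a
  exact Finset.sup_le fun p hp => h p (hs hp) (Finset.le_sup (f := id) hp)

theorem SupIrred.exists_isGreatest_Iio [OrderBot L] {p : L} (hp : SupIrred p) :
    ∃ q, IsGreatest (Set.Iio p) q := by
  set q := (Finset.univ.filter (· < p)).sup id
  have hle : ∀ x < p, x ≤ q := fun x hx =>
    Finset.le_sup (f := id) (Finset.mem_filter.2 ⟨Finset.mem_univ x, hx⟩)
  refine ⟨q, lt_of_le_of_ne (Finset.sup_le fun x hx => (Finset.mem_filter.1 hx).2.le)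
    fun hqp => ?_, hle⟩
  obtain ⟨x, hx, rfl⟩ := hp.finset_sup_eq hqp
  exact (Finset.mem_filter.1 hx).2.false

variable {k W : Type*} [Field k] [AddCommGroup W] [Module k W]

theorem span_Jle_le_span_Jle_iff [OrderBot L] {φ : L → W}
    (hsep : ∀ p b, SupIrred p → φ p ∈ Submodule.span k (φ '' Jle b) → p ≤ b) (a b : L) :
    Submodule.span k (φ '' Jle a) ≤ Submodule.span k (φ '' Jle b) ↔ a ≤ b := by
  refine ⟨fun h => le_of_forall_supIrred_le fun p hp hpa => hsep p b hp (h ?_), fun h => ?_⟩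
  · exact Submodule.subset_span (Set.mem_image_of_mem φ (mem_Jle.2 ⟨hp, hpa⟩))
  · exact Submodule.span_mono (Set.image_mono (Finset.coe_subset.2 (Jle_mono h)))

end Jle

section Modeling

variable {k W : Type*} [Field k] [AddCommGroup W] [Module k W]
variable {L : Type*} [Lattice L] [BoundedOrder L] [Fintype L]

theorem LatticeModelsVec.le_of_mem_span {E : Finset W} {φ : L → W}
    (h : LatticeModelsVec k L E φ) {p b : L} (hp : SupIrred p)
    (hpb : φ p ∈ Submodule.span k (φ '' Jle b)) : p ≤ b := by
  obtain ⟨hbij, -, hclosed, -⟩ := h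
  have hpJ : p ∈ JFinset L := mem_JFinset.2 hp
  have hmem : φ p ∈ φ '' Jle b := by
    rw [← Finset.coe_image, ← hclosed b, Finset.coe_image]
    exact ⟨hpb, hbij.mapsTo hpJ⟩
  obtain ⟨q, hq, hqp⟩ := hmem
  rw [← hbij.injOn (Jle_subset_JFinset b hq) hpJ hqp]
  exact (mem_Jle.1 hq).2

theorem LatticeModelsVec.isTightEmbedding [IsModularLattice L] {E : Finset W} {φ : L → W}
    (h : LatticeModelsVec k L E φ) :
    IsTightEmbedding fun a : L => Submodule.span k (((Jle a).image φ : Finset W) : Set W) := by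
  simp only [Finset.coe_image]
  let := IsModularLattice.gradeMinOrder (L := L)
  let V : L ↪o Submodule k W :=
    .ofMapLEIff _ (span_Jle_le_span_Jle_iff fun _ _ hp hpb => h.le_of_mem_span hp hpb)
  have htop : V ⊤ = Submodule.span k (E : Set W) := by
    simp [V, Jle_top, h.1.image_eq]
  have : FiniteDimensional k (V ⊤) := htop ▸ inferInstance
  exact V.isTightEmbedding_of_finrank_top (by rw [htop, h.2.2.2, latHeight_eq_grade_top])

theorem SupIrred.exists_mem_iff_le {Φ : L → Submodule k W} (hΦ : StrictMono Φ)
    (hinf : ∀ a b, Φ (a ⊓ b) = Φ a ⊓ Φ b) {p : L} (hp : SupIrred p) :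
    ∃ v : W, ∀ a, v ∈ Φ a ↔ p ≤ a := by
  obtain ⟨q, hqp, hq⟩ := hp.exists_isGreatest_Iio
  obtain ⟨v, hvp, hvq⟩ := SetLike.exists_of_lt (hΦ hqp)
  refine ⟨v, fun a => ⟨fun hva => ?_, fun hpa => hΦ.monotone hpa hvp⟩⟩
  by_contra hpa
  have hv : v ∈ Φ (a ⊓ p) := hinf a p ▸ Submodule.mem_inf.2 ⟨hva, hvp⟩
  exact hvq (hΦ.monotone (hq (inf_lt_right.2 hpa)) hv)

variable {Φ : L → Submodule k W} {φ : L → W}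

theorem IsTightEmbedding.eq_span_Jle [GradeMinOrder ℕ L] [FiniteDimensional k W]
    (hΦ : IsTightEmbedding Φ) (hφ : ∀ p, SupIrred p → ∀ a, φ p ∈ Φ a ↔ p ≤ a) (a : L) :
    Φ a = Submodule.span k (φ '' Jle a) := by
  have hle : ∀ b, Submodule.span k (φ '' Jle b) ≤ Φ b := by
    intro b
    rw [Submodule.span_le, Set.image_subset_iff]
    exact fun p hp => (hφ p (mem_Jle.1 hp).1 b).2 (mem_Jle.1 hp).2
  let V : L ↪o Submodule k W :=
    .ofMapLEIff _ (span_Jle_le_span_Jle_iff fun p b hp hpb => (hφ p hp b).1 (hle b hpb))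
  have hrank := grade_add_le_grade_add_of_strictMono (f := fun a => Module.finrank k (V a))
    (fun a b hab => Submodule.finrank_lt_finrank_of_lt (V.strictMono hab)) (bot_le : ⊥ ≤ a)
  simp only [grade_bot, Nat.bot_eq_zero, zero_add] at hrank
  refine (Submodule.eq_of_le_of_finrank_le (hle a) ?_).symm
  rw [hΦ.finrank_eq_grade]
  exact (Nat.le_add_right _ _).trans hrank

theorem simpleVecSet_image_of_mem_iff_le (hbot : Φ ⊥ = ⊥)
    (hφ : ∀ p, SupIrred p → ∀ a, φ p ∈ Φ a ↔ p ≤ a) :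
    SimpleVecSet k ((JFinset L).image φ) := by
  have hne : ∀ p, SupIrred p → φ p ≠ 0 := fun p hp h0 =>
    hp.ne_bot (le_bot_iff.1 ((hφ p hp ⊥).1 (h0 ▸ hbot ▸ Submodule.zero_mem ⊥)))
  refine ⟨fun h0 => ?_, fun v hv w hw hvw c hc => ?_⟩
  · obtain ⟨p, hp, h⟩ := Finset.mem_image.1 h0
    exact hne p (mem_JFinset.1 hp) h
  obtain ⟨p, hp, rfl⟩ := Finset.mem_image.1 hv
  obtain ⟨q, hq, rfl⟩ := Finset.mem_image.1 hw
  replace hp := mem_JFinset.1 hp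
  replace hq := mem_JFinset.1 hq
  have hc0 : c ≠ 0 := by rintro rfl; exact hne q hq (by simpa using hc)
  have hqp : q ≤ p := (hφ q hq p).1 (hc ▸ Submodule.smul_mem _ c ((hφ p hp p).2 le_rfl))
  have hpq : p ≤ q := by
    refine (hφ p hp q).1 ?_
    rw [← inv_smul_smul₀ hc0 (φ p), ← hc]
    exact Submodule.smul_mem _ _ ((hφ q hq q).2 le_rfl)
  exact hvw (by rw [le_antisymm hpq hqp])

theorem IsTightEmbedding.latticeModelsVec [GradeMinOrder ℕ L] [FiniteDimensional k W]
    (hΦ : IsTightEmbedding Φ) (hφ : ∀ p, SupIrred p → ∀ a, φ p ∈ Φ a ↔ p ≤ a) :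
    LatticeModelsVec k L ((JFinset L).image φ) φ := by
  have hinj : Set.InjOn φ (JFinset L : Set L) := fun p hp q hq hpq => by
    replace hp := mem_JFinset.1 hp
    replace hq := mem_JFinset.1 hq
    exact le_antisymm ((hφ p hp q).1 (hpq ▸ (hφ q hq q).2 le_rfl))
      ((hφ q hq p).1 (hpq ▸ (hφ p hp p).2 le_rfl))
  refine ⟨⟨?_, hinj, ?_⟩, simpleVecSet_image_of_mem_iff_le hΦ.2.2.1 hφ, fun a => ?_, ?_⟩
  · rw [Finset.coe_image]
    exact Set.mapsTo_image φ _
  · rw [Finset.coe_image]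
    exact Set.surjOn_image φ _
  · simp only [Finset.coe_image]
    ext x
    refine ⟨fun ⟨hx, hxE⟩ => ?_, fun hx => ⟨Submodule.subset_span hx, ?_⟩⟩
    · obtain ⟨q, hq, rfl⟩ := hxE
      have hqa := (hφ q (mem_JFinset.1 hq) a).1 (hΦ.eq_span_Jle hφ a ▸ hx)
      exact Set.mem_image_of_mem φ (mem_Jle.2 ⟨mem_JFinset.1 hq, hqa⟩)
    · exact Set.image_mono (Finset.coe_subset.2 (Jle_subset_JFinset a)) hx
  · rw [← Jle_top, Finset.coe_image, ← hΦ.eq_span_Jle hφ, hΦ.finrank_eq_grade,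
      latHeight_eq_grade_top]

theorem IsTightEmbedding.exists_latticeModelsVec [IsModularLattice L] [FiniteDimensional k W]
    (hΦ : IsTightEmbedding Φ) :
    ∃ (E : Finset W) (φ : L → W), LatticeModelsVec k L E φ ∧
      ∀ a : L, Φ a = Submodule.span k (φ '' Jle a) := by
  let := IsModularLattice.gradeMinOrder (L := L)
  have : ∀ p : L, ∃ v : W, SupIrred p → ∀ a, v ∈ Φ a ↔ p ≤ a := fun p => by
    by_cases hp : SupIrred p
    · obtain ⟨v, hv⟩ := hp.exists_mem_iff_le hΦ.strictMono hΦ.2.1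
      exact ⟨v, fun _ => hv⟩
    · exact ⟨0, fun h => (hp h).elim⟩
  choose φ hφ using this
  exact ⟨_, φ, hΦ.latticeModelsVec hφ, hΦ.eq_span_Jle hφ⟩

end Modeling

theorem statement_14 (k : Type) [Field k]
    (L : Type) [Lattice L] [BoundedOrder L] [Fintype L] [IsModularLattice L] :
    (∀ (W : Type) [AddCommGroup W] [Module k W], ∀ (E : Finset W) (φ : L → W),
      LatticeModelsVec k L E φ →
      IsTightEmbedding fun a : L =>
        Submodule.span k (((Jle a).image φ : Finset W) : Set W)) ∧
    (∀ (m : ℕ) (Φ' : L → Submodule k (Fin m → k)), IsTightEmbedding Φ' →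
      ∃ (E : Finset (Fin m → k)) (φ : L → (Fin m → k)),
        LatticeModelsVec k L E φ ∧
        ∀ a : L, Φ' a = Submodule.span k (((Jle a).image φ : Finset (Fin m → k)) : Set (Fin m → k))) :=
  ⟨fun _ _ _ _ _ h => h.isTightEmbedding, fun _ _ hΦ' => by
    simpa only [Finset.coe_image] using hΦ'.exists_latticeModelsVec⟩

end
end
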